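/- arXiv:2006.00516 — 9 statements merged into one kernel-verified Lean document; each statement's English description precedes it below -/
import Mathlib

section
/- For every integer n ≥ 2, every vector p = (p_1,…,p_n) ∈ [0,1]^n, and every real number q with max_{i∈[n]} p_i ≤ q ≤ 1 and q > 0, there exists a probability distribution θ on {0,1}^n such that P_θ(c_i = 1) = p_i for every i ∈ [n] and P_θ(c_i = 1, c_j = 1) = p_i p_j / q for every pair 1 ≤ i < j ≤ n. -/
/-! Let `Z ~ Bernoulli(q)` and, independently, `B_i ~ Bernoulli(p_i / q)`, and set
`c_i = Z ∧ B_i`. Then `P(c_i = 1) = q · (p_i / q) = p_i` and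
`P(c_i = 1, c_j = 1) = q · (p_i / q) · (p_j / q) = p_i p_j / q`. -/

open Finset

noncomputable section

/-- Probability that at least `k` of the `n` coordinates equal `1` under the pmf `θ` on `{0,1}^n`. -/
def probGE (n : ℕ) (θ : (Fin n → Bool) → ℝ) (k : ℕ) : ℝ :=
  ∑ c ∈ Finset.univ.filter
      (fun c : Fin n → Bool => k ≤ (Finset.univ.filter (fun i => c i = true)).card), θ c

/-- Probability that all `n` coordinates equal `1` under the pmf `θ` on `{0,1}^n`. -/
def probAll (n : ℕ) (θ : (Fin n → Bool) → ℝ) : ℝ :=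
  ∑ c ∈ Finset.univ.filter (fun c : Fin n → Bool => ∀ i, c i = true), θ c

/-- `θ` is a probability mass function on `{0,1}^n`. -/
def IsDist (n : ℕ) (θ : (Fin n → Bool) → ℝ) : Prop :=
  (∀ c, 0 ≤ θ c) ∧ (∑ c, θ c = 1)

/-- Univariate marginal probability `P_θ(c_i = 1)`. -/
def Marg (n : ℕ) (θ : (Fin n → Bool) → ℝ) (i : Fin n) : ℝ :=
  ∑ c ∈ Finset.univ.filter (fun c : Fin n → Bool => c i = true), θ c

/-- Bivariate probability `P_θ(c_i = 1, c_j = 1)`. -/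
def Biv (n : ℕ) (θ : (Fin n → Bool) → ℝ) (i j : Fin n) : ℝ :=
  ∑ c ∈ Finset.univ.filter (fun c : Fin n → Bool => c i = true ∧ c j = true), θ c

/-- `θ` is a pairwise independent distribution with marginal vector `p`. -/
def PairwiseIndep (n : ℕ) (p : Fin n → ℝ) (θ : (Fin n → Bool) → ℝ) : Prop :=
  IsDist n θ ∧ (∀ i, Marg n θ i = p i) ∧
    (∀ i j : Fin n, i < j → Biv n θ i j = p i * p j)

variable {ι : Type*} [Fintype ι]

def bernoulliProd (r : ι → ℝ) (c : ι → Bool) : ℝ :=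
  ∏ j, if c j then r j else 1 - r j

lemma bernoulliProd_nonneg {r : ι → ℝ} (hr0 : ∀ i, 0 ≤ r i) (hr1 : ∀ i, r i ≤ 1)
    (c : ι → Bool) : 0 ≤ bernoulliProd r c :=
  prod_nonneg fun j _ => by cases c j <;> simp [hr0 j, hr1 j]

lemma sum_bernoulliProd_filter_forall_mem [DecidableEq ι] (r : ι → ℝ) (s : Finset ι) :
    ∑ c ∈ univ.filter (fun c : ι → Bool => ∀ i ∈ s, c i = true), bernoulliProd r c =
      ∏ i ∈ s, r i := by
  -- The event is a box `∏ j, t j`, so the sum of the product factorises coordinatewise.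
  set t : ι → Finset Bool := fun j => if j ∈ s then {true} else univ
  have hevent :
      univ.filter (fun c : ι → Bool => ∀ i ∈ s, c i = true) = Fintype.piFinset t := by
    ext c
    simp only [mem_filter, mem_univ, true_and, Fintype.mem_piFinset, t]
    refine forall_congr' fun j => ?_
    by_cases hj : j ∈ s <;> simp [hj]
  have hfactor :
      ∀ j, ∑ b ∈ t j, (if b then r j else 1 - r j) = if j ∈ s then r j else 1 := by
    intro j
    by_cases hj : j ∈ s <;> simp [t, hj]
  rw [hevent]
  unfold bernoulliProd
  rw [← prod_univ_sum t fun j b => if b then r j else 1 - r j]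
  simp only [hfactor, prod_ite_mem, univ_inter]

/-- The law of `c_i = Z ∧ B_i`, with `Z ~ Bernoulli(q)` and `B_i ~ Bernoulli(r i)` independent. -/
def gatedBernoulliProd (q : ℝ) (r : ι → ℝ) (c : ι → Bool) : ℝ :=
  q * bernoulliProd r c + if c = fun _ => false then 1 - q else 0

lemma gatedBernoulliProd_nonneg {q : ℝ} {r : ι → ℝ} (hq0 : 0 ≤ q) (hq1 : q ≤ 1)
    (hr0 : ∀ i, 0 ≤ r i) (hr1 : ∀ i, r i ≤ 1) (c : ι → Bool) :
    0 ≤ gatedBernoulliProd q r c := by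
  have hprod := bernoulliProd_nonneg hr0 hr1 c
  have hatom : (0 : ℝ) ≤ if c = fun _ => false then 1 - q else 0 := by
    split_ifs <;> linarith
  unfold gatedBernoulliProd
  positivity

lemma sum_gatedBernoulliProd [DecidableEq ι] (q : ℝ) (r : ι → ℝ) :
    ∑ c, gatedBernoulliProd q r c = 1 := by
  have hprod : ∑ c, bernoulliProd r c = 1 := by
    simpa using sum_bernoulliProd_filter_forall_mem r ∅
  simp only [gatedBernoulliProd, sum_add_distrib, ← mul_sum, hprod, sum_ite_eq', mem_univ,
    if_true]
  ring

lemma sum_gatedBernoulliProd_filter_forall_mem [DecidableEq ι] (q : ℝ) (r : ι → ℝ)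
    {s : Finset ι} (hs : s.Nonempty) :
    ∑ c ∈ univ.filter (fun c : ι → Bool => ∀ i ∈ s, c i = true),
      gatedBernoulliProd q r c = q * ∏ i ∈ s, r i := by
  obtain ⟨i, hi⟩ := hs
  have hatom : ∀ c ∈ univ.filter (fun c : ι → Bool => ∀ i ∈ s, c i = true),
      (if c = fun _ => false then 1 - q else 0) = 0 := by
    intro c hc
    rw [if_neg]
    rintro rfl
    simpa using (mem_filter.mp hc).2 i hi
  simp only [gatedBernoulliProd, sum_add_distrib, ← mul_sum, sum_bernoulliProd_filter_forall_mem,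
    sum_eq_zero hatom, add_zero]

theorem stmt_0_general (n : ℕ) (p : Fin n → ℝ)
    (hp0 : ∀ i, 0 ≤ p i)
    (q : ℝ) (hq0 : 0 < q) (hq1 : q ≤ 1) (hqp : ∀ i, p i ≤ q) :
    ∃ θ : (Fin n → Bool) → ℝ, IsDist n θ ∧ (∀ i, Marg n θ i = p i) ∧
      (∀ i j : Fin n, i < j → Biv n θ i j = p i * p j / q) := by
  set r : Fin n → ℝ := fun i => p i / q with hr
  have hr0 : ∀ i, 0 ≤ r i := fun i => div_nonneg (hp0 i) hq0.le
  have hr1 : ∀ i, r i ≤ 1 := fun i => (div_le_one hq0).mpr (hqp i)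
  refine ⟨gatedBernoulliProd q r,
    ⟨gatedBernoulliProd_nonneg hq0.le hq1 hr0 hr1, sum_gatedBernoulliProd q r⟩, fun i => ?_,
    fun i j hij => ?_⟩
  · convert sum_gatedBernoulliProd_filter_forall_mem q r (singleton_nonempty i) using 1
    · simp [Marg]
    · rw [prod_singleton, hr]
      field_simp
  · convert sum_gatedBernoulliProd_filter_forall_mem q r (insert_nonempty i {j}) using 1
    · simp [Biv]
    · rw [prod_pair hij.ne, hr]
      field_simp

theorem stmt_0 (n : ℕ) (hn : 2 ≤ n) (p : Fin n → ℝ)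
    (hp0 : ∀ i, 0 ≤ p i) (hp1 : ∀ i, p i ≤ 1)
    (q : ℝ) (hq0 : 0 < q) (hq1 : q ≤ 1) (hqp : ∀ i, p i ≤ q) :
    ∃ θ : (Fin n → Bool) → ℝ, IsDist n θ ∧ (∀ i, Marg n θ i = p i) ∧
      (∀ i j : Fin n, i < j → Biv n θ i j = p i * p j / q) :=
  stmt_0_general n p hp0 q hq0 hq1 hqp
end
end

section
/- Let n ≥ 2 and let p = (p_1,…,p_n) ∈ [0,1]^n with 0 ≤ p_1 ≤ p_2 ≤ … ≤ p_n ≤ 1. Then for every pairwise independent distribution θ with marginal vector p, the probability that at least one coordinate equals 1 satisfies P_θ(∑_{i=1}^n c_i ≥ 1) ≤ min( ∑_{i=1}^n p_i − p_n·(∑_{i=1}^{n−1} p_i), 1 ). -/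
open Finset

noncomputable section

theorem stmt_2 (n : ℕ) (hn : 2 ≤ n) (p : Fin n → ℝ)
    (hp0 : ∀ i, 0 ≤ p i) (hp1 : ∀ i, p i ≤ 1) (hmono : Monotone p)
    (θ : (Fin n → Bool) → ℝ) (hθ : PairwiseIndep n p θ) :
    probGE n θ 1 ≤
      min ((∑ i, p i) -
        p ⟨n - 1, by omega⟩ * ∑ i ∈ Finset.univ.erase (⟨n - 1, by omega⟩ : Fin n), p i) 1 := by

  obtain ⟨⟨hnn, hsum⟩, hmarg, hbiv⟩ := hθ
  have hnpos : n - 1 < n := by omega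
  set last : Fin n := ⟨n - 1, hnpos⟩ with hlastdef
  -- helper: g
  have hMarg : ∀ i : Fin n, Marg n θ i = ∑ c, (if c i then (1:ℝ) else 0) * θ c := by
    intro i
    rw [Marg, Finset.sum_filter]
    refine Finset.sum_congr rfl fun c _ => ?_
    by_cases h : c i <;> simp [h]
  have hBiv : ∀ i : Fin n, Biv n θ i last =
      ∑ c, (if c last then (1:ℝ) else 0) * (if c i then (1:ℝ) else 0) * θ c := by
    intro i
    rw [Biv, Finset.sum_filter]
    refine Finset.sum_congr rfl fun c _ => ?_
    by_cases h1 : c i <;> by_cases h2 : c last <;> simp [h1, h2]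
  refine le_min ?_ ?_
  · -- main bound
    have key : ∀ c : Fin n → Bool,
        (if 1 ≤ (Finset.univ.filter (fun i => c i = true)).card then (1:ℝ) else 0)
          ≤ (∑ i, if c i then (1:ℝ) else 0)
            - (if c last then (1:ℝ) else 0) *
              ∑ i ∈ Finset.univ.erase last, (if c i then (1:ℝ) else 0) := by
      intro c
      have hsplit : (∑ i, if c i then (1:ℝ) else 0)
          = (if c last then (1:ℝ) else 0)
            + ∑ i ∈ Finset.univ.erase last, (if c i then (1:ℝ) else 0) := by
        rw [← Finset.add_sum_erase _ _ (Finset.mem_univ last)]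
      have hS0 : (0:ℝ) ≤ ∑ i ∈ Finset.univ.erase last, (if c i then (1:ℝ) else 0) :=
        Finset.sum_nonneg fun i _ => by positivity
      by_cases h : c last
      · rw [hsplit]
        simp only [h, if_true, one_mul, add_sub_cancel_right]
        split_ifs <;> norm_num
      · rw [hsplit]
        have h' : c last = false := by simpa using h
        simp only [h', Bool.false_eq_true, if_false, zero_mul, zero_add, sub_zero]
        by_cases hc : 1 ≤ (Finset.univ.filter (fun i => c i = true)).card
        · obtain ⟨i, hi⟩ := Finset.card_pos.mp hc
          simp only [Finset.mem_filter, Finset.mem_univ, true_and] at hi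
          have hine : i ≠ last := by
            intro heq; rw [heq] at hi; rw [hi] at h; exact h rfl
          have := Finset.single_le_sum (f := fun i => if c i then (1:ℝ) else 0)
            (fun j _ => by positivity) (Finset.mem_erase.mpr ⟨hine, Finset.mem_univ i⟩)
          rw [if_pos hc]
          simpa [hi] using this
        · simp [hc, hS0]
    have step1 : probGE n θ 1 =
        ∑ c, (if 1 ≤ (Finset.univ.filter (fun i => c i = true)).card then (1:ℝ) else 0) * θ c := by
      rw [probGE, Finset.sum_filter]
      refine Finset.sum_congr rfl fun c _ => ?_
      split_ifs <;> simp
    have step2 : probGE n θ 1 ≤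
        ∑ c, ((∑ i, if c i then (1:ℝ) else 0)
            - (if c last then (1:ℝ) else 0) *
              ∑ i ∈ Finset.univ.erase last, (if c i then (1:ℝ) else 0)) * θ c := by
      rw [step1]
      exact Finset.sum_le_sum fun c _ => mul_le_mul_of_nonneg_right (key c) (hnn c)
    have step3 :
        (∑ c, ((∑ i, if c i then (1:ℝ) else 0)
            - (if c last then (1:ℝ) else 0) *
              ∑ i ∈ Finset.univ.erase last, (if c i then (1:ℝ) else 0)) * θ c)
        = (∑ i, Marg n θ i) - ∑ i ∈ Finset.univ.erase last, Biv n θ i last := by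
      simp only [sub_mul, Finset.sum_sub_distrib, Finset.sum_mul, Finset.mul_sum]
      rw [Finset.sum_comm]
      congr 1
      · refine Finset.sum_congr rfl fun i _ => ?_
        rw [hMarg]
      · rw [Finset.sum_comm]
        refine Finset.sum_congr rfl fun i _ => ?_
        rw [hBiv]
    have hlt : ∀ i ∈ Finset.univ.erase last, i < last := by
      intro i hi
      have hine : i ≠ last := (Finset.mem_erase.mp hi).1
      have : i.val ≠ n - 1 := fun h => hine (Fin.ext h)
      have : i.val < n - 1 := by omega
      exact this
    have step4 : (∑ i, Marg n θ i) - ∑ i ∈ Finset.univ.erase last, Biv n θ i last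
        = (∑ i, p i) - p last * ∑ i ∈ Finset.univ.erase last, p i := by
      rw [Finset.mul_sum]
      congr 1
      · exact Finset.sum_congr rfl fun i _ => hmarg i
      · refine Finset.sum_congr rfl fun i hi => ?_
        rw [hbiv i last (hlt i hi), mul_comm]
    calc probGE n θ 1 ≤ _ := step2
      _ = _ := step3
      _ = _ := step4
  · -- ≤ 1
    rw [probGE, ← hsum]
    exact Finset.sum_le_sum_of_subset_of_nonneg (Finset.filter_subset _ _)
      (fun c _ _ => hnn c)
end
end

section
/- Let n ≥ 2 and let p = (p_1,…,p_n) ∈ [0,1]^n with 0 ≤ p_1 ≤ p_2 ≤ … ≤ p_n ≤ 1. Then for every pairwise independent distribution θ with marginal vector p, the probability that all coordinates equal 1 satisfies P_θ(∑_{i=1}^n c_i = n) ≥ max( p_1·( ∑_{i=2}^n p_i − (n−2) ), 0 ). -/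
open Finset

noncomputable section

theorem stmt_5 (n : ℕ) (hn : 2 ≤ n) (p : Fin n → ℝ)
    (hp0 : ∀ i, 0 ≤ p i) (hp1 : ∀ i, p i ≤ 1) (hmono : Monotone p)
    (θ : (Fin n → Bool) → ℝ) (hθ : PairwiseIndep n p θ) :
    max (p (⟨0, by omega⟩ : Fin n) *
        ((∑ i ∈ Finset.univ.erase (⟨0, by omega⟩ : Fin n), p i) - ((n : ℝ) - 2))) 0 ≤
      probAll n θ := by
  obtain ⟨⟨hnn, hsum⟩, hmarg, hbiv⟩ := hθ
  set i0 : Fin n := ⟨0, by omega⟩ with hi0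
  set E : Finset (Fin n) := Finset.univ.erase i0 with hE
  have hEcard : (E.card : ℝ) = (n : ℝ) - 1 := by
    rw [hE, Finset.card_erase_of_mem (Finset.mem_univ _), Finset.card_univ,
      Fintype.card_fin]
    have h1n : (1:ℕ) ≤ n := by omega
    push_cast [h1n]; ring
  -- probAll is nonneg
  have hAll0 : 0 ≤ probAll n θ := Finset.sum_nonneg fun c _ => hnn c
  -- rewrite probAll as full sum with indicator
  have hAll : probAll n θ = ∑ c : Fin n → Bool,
      (if ∀ i, c i = true then θ c else 0) := by
    rw [probAll, Finset.sum_filter]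
  -- pointwise inequality
  have key : ∀ c : Fin n → Bool,
      θ c * ((if c i0 = true then (1:ℝ) else 0) *
        ((∑ i ∈ E, if c i = true then (1:ℝ) else 0) - ((n:ℝ) - 2)))
      ≤ (if ∀ i, c i = true then θ c else 0) := by
    intro c
    by_cases h0 : c i0 = true
    · by_cases hall : ∀ i, c i = true
      · have hs : (∑ i ∈ E, if c i = true then (1:ℝ) else 0) = (E.card : ℝ) := by
          simp [hall]
        rw [if_pos hall, if_pos h0, hs, hEcard]
        nlinarith [hnn c]
      · push_neg at hall
        obtain ⟨j, hj⟩ := hall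
        have hjE : j ∈ E := by
          rw [hE, Finset.mem_erase]
          exact ⟨fun h => hj (h ▸ h0), Finset.mem_univ _⟩
        have hs : (∑ i ∈ E, if c i = true then (1:ℝ) else 0)
            ≤ ((E.erase j).card : ℝ) := by
          rw [← Finset.add_sum_erase E _ hjE, if_neg hj, zero_add]
          calc (∑ i ∈ E.erase j, if c i = true then (1:ℝ) else 0)
              ≤ ∑ _i ∈ E.erase j, (1:ℝ) :=
                Finset.sum_le_sum (fun i _ => by split <;> norm_num)
            _ = ((E.erase j).card : ℝ) := by rw [Finset.sum_const]; simp
        have hcard2 : ((E.erase j).card : ℝ) ≤ (n : ℝ) - 2 := by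
          have := Finset.card_erase_le (s := E) (a := j)
          have h2 : (E.erase j).card = E.card - 1 :=
            Finset.card_erase_of_mem hjE
          have hEc : E.card = n - 1 := by
            rw [hE, Finset.card_erase_of_mem (Finset.mem_univ _), Finset.card_univ,
              Fintype.card_fin]
          rw [h2, hEc]
          have : ((n - 1 - 1 : ℕ) : ℝ) = (n:ℝ) - 2 := by
            have h2n : (2:ℕ) ≤ n := hn
            push_cast [Nat.sub_sub]
            rw [Nat.cast_sub h2n]; push_cast; ring
          rw [this]
        rw [if_pos h0, if_neg (show ¬∀ i, c i = true from fun h => hj (h j))]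
        nlinarith [hnn c]
    · rw [if_neg h0, if_neg (fun h : ∀ i, c i = true => h0 (h i0))]
      simp
  -- sum up the pointwise inequality
  have hmain : (∑ c : Fin n → Bool, θ c * ((if c i0 = true then (1:ℝ) else 0) *
        ((∑ i ∈ E, if c i = true then (1:ℝ) else 0) - ((n:ℝ) - 2))))
      ≤ probAll n θ := by
    rw [hAll]
    exact Finset.sum_le_sum fun c _ => key c
  -- compute the LHS
  have hbiv' : ∀ i ∈ E, (∑ c : Fin n → Bool,
      θ c * ((if c i0 = true then (1:ℝ) else 0) * (if c i = true then (1:ℝ) else 0)))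
      = p i0 * p i := by
    intro i hiE
    have hlt : i0 < i := by
      rw [hE, Finset.mem_erase] at hiE
      have : i0.val = 0 := rfl
      have hne : i ≠ i0 := hiE.1
      have : 0 < i.val := by
        rcases Nat.eq_zero_or_pos i.val with h | h
        · exact absurd (Fin.ext h) hne
        · exact h
      exact this
    rw [← hbiv i0 i hlt, Biv, Finset.sum_filter]
    apply Finset.sum_congr rfl
    intro c _
    by_cases h1 : c i0 = true <;> by_cases h2 : c i = true <;>
      simp [h1, h2]
  have hmarg' : (∑ c : Fin n → Bool, θ c * (if c i0 = true then (1:ℝ) else 0))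
      = p i0 := by
    rw [← hmarg i0, Marg, Finset.sum_filter]
    apply Finset.sum_congr rfl
    intro c _
    by_cases h1 : c i0 = true <;> simp [h1]
  have hcompute : (∑ c : Fin n → Bool, θ c * ((if c i0 = true then (1:ℝ) else 0) *
        ((∑ i ∈ E, if c i = true then (1:ℝ) else 0) - ((n:ℝ) - 2))))
      = p i0 * ((∑ i ∈ E, p i) - ((n:ℝ) - 2)) := by
    have expand : ∀ c : Fin n → Bool,
        θ c * ((if c i0 = true then (1:ℝ) else 0) *
          ((∑ i ∈ E, if c i = true then (1:ℝ) else 0) - ((n:ℝ) - 2)))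
        = (∑ i ∈ E, θ c * ((if c i0 = true then (1:ℝ) else 0) *
            (if c i = true then (1:ℝ) else 0)))
          - ((n:ℝ) - 2) * (θ c * (if c i0 = true then (1:ℝ) else 0)) := by
      intro c
      rw [← Finset.mul_sum, ← Finset.mul_sum]
      ring
    rw [Finset.sum_congr rfl (fun c _ => expand c), Finset.sum_sub_distrib,
      Finset.sum_comm, ← Finset.mul_sum, hmarg',
      Finset.sum_congr rfl hbiv', ← Finset.mul_sum]
    ring
  rw [hcompute] at hmain
  exact max_le hmain hAll0
end
end

section
/- Let n ≥ 2, let k be an integer with 2 ≤ k ≤ n, and let p = (p_1,…,p_n) ∈ [0,1]^n with 0 ≤ p_1 ≤ p_2 ≤ … ≤ p_n ≤ 1. Then for every pairwise independent distribution θ with marginal vector p: (i) for every integer r_1 with 0 ≤ r_1 ≤ k−1, P_θ(∑_{i=1}^n c_i ≥ k) ≤ S_{1r_1}/(k−r_1); and (ii) for every integer r_2 with 0 ≤ r_2 ≤ k−2, P_θ(∑_{i=1}^n c_i ≥ k) ≤ S_{2r_2} / C(k−r_2, 2), where C(m,2) = m(m−1)/2. -/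
open Finset

noncomputable section

/-! Both bounds are Markov's inequality. On the event that at least `k` coordinates equal `1`,
at least `k - r` of them lie among the first `n - r` coordinates, so the number of ones there is
at least `k - r` and the number of pairs of ones there is at least `C(k - r, 2)`. By linearity of
expectation and pairwise independence, the expectations of these two counts are `S_{1r}` and
`S_{2r}`. -/

section Counting

variable {α : Type*}

lemma sub_le_card_filter_of_card_compl_le [Fintype α] [DecidableEq α] {P : α → Prop}
    [DecidablePred P] {A : Finset α} {k r : ℕ} (hk : k ≤ #{a | P a}) (hA : #Aᶜ ≤ r) :
    k - r ≤ #{a ∈ A | P a} := by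
  have hsub : ({a | P a} : Finset α) \ Aᶜ ⊆ {a ∈ A | P a} := by
    intro a
    simp only [mem_sdiff, mem_filter, mem_univ, mem_compl, not_not]
    tauto
  have := le_card_sdiff Aᶜ ({a | P a} : Finset α)
  have := card_le_card hsub
  omega

lemma card_filter_lt_and_eq_choose_two [LinearOrder α] (s : Finset α) (P : α → Prop)
    [DecidablePred P] :
    #{x ∈ s ×ˢ s | x.1 < x.2 ∧ P x.1 ∧ P x.2} = (#{a ∈ s | P a}).choose 2 := by
  rw [← card_product_filter_lt]
  congr 1
  ext x
  simp only [mem_filter, mem_product]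
  tauto

lemma sum_sum_filter_lt [LinearOrder α] {M : Type*} [AddCommMonoid M] (s : Finset α)
    (f : α → α → M) :
    ∑ i ∈ s, ∑ j ∈ s with i < j, f i j = ∑ x ∈ s ×ˢ s with x.1 < x.2, f x.1 x.2 := by
  rw [sum_filter, sum_product]
  simp_rw [sum_filter]

lemma card_compl_filter_val_lt_le (n r : ℕ) :
    #({i : Fin n | (i : ℕ) < n - r} : Finset (Fin n))ᶜ ≤ r := by
  rw [card_compl, Fintype.card_fin, Fin.card_filter_val_lt]
  omega

end Counting

section Expectation

variable {Ω ι : Type*} [Fintype Ω]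

lemma sum_sum_filter_eq_sum_card_mul (θ : Ω → ℝ) (s : Finset ι) (E : ι → Ω → Prop)
    [∀ i ω, Decidable (E i ω)] :
    ∑ i ∈ s, ∑ ω with E i ω, θ ω = ∑ ω, (#{i ∈ s | E i ω} : ℝ) * θ ω := by
  simp_rw [sum_filter]
  rw [sum_comm]
  refine sum_congr rfl fun ω _ => ?_
  rw [← sum_filter, sum_const, nsmul_eq_mul]

lemma mul_sum_filter_le_sum_mul {θ : Ω → ℝ} (hθ : ∀ ω, 0 ≤ θ ω) (P : Ω → Prop)
    [DecidablePred P] {g : Ω → ℝ} {m : ℝ} (hg0 : ∀ ω, 0 ≤ g ω)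
    (hg : ∀ ω, P ω → m ≤ g ω) :
    m * ∑ ω with P ω, θ ω ≤ ∑ ω, g ω * θ ω :=
  calc m * ∑ ω with P ω, θ ω
      = ∑ ω with P ω, m * θ ω := mul_sum _ _ _
    _ ≤ ∑ ω with P ω, g ω * θ ω :=
      sum_le_sum fun ω hω => mul_le_mul_of_nonneg_right (hg ω (mem_filter.mp hω).2) (hθ ω)
    _ ≤ ∑ ω, g ω * θ ω :=
      sum_le_sum_of_subset_of_nonneg (filter_subset _ _) fun ω _ _ => mul_nonneg (hg0 ω) (hθ ω)

end Expectation

section Bounds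

variable {n : ℕ} {θ : (Fin n → Bool) → ℝ}

lemma mul_probGE_le_sum_marg (hθ : ∀ c, 0 ≤ θ c) {A : Finset (Fin n)} {k r : ℕ}
    (hA : #Aᶜ ≤ r) :
    ((k - r : ℕ) : ℝ) * probGE n θ k ≤ ∑ i ∈ A, Marg n θ i := by
  simp only [Marg]
  rw [sum_sum_filter_eq_sum_card_mul]
  exact mul_sum_filter_le_sum_mul hθ _ (fun _ => by positivity)
    fun c hc => mod_cast sub_le_card_filter_of_card_compl_le hc hA

lemma choose_two_mul_probGE_le_sum_biv (hθ : ∀ c, 0 ≤ θ c) {A : Finset (Fin n)} {k r : ℕ}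
    (hA : #Aᶜ ≤ r) :
    (((k - r).choose 2 : ℕ) : ℝ) * probGE n θ k ≤
      ∑ i ∈ A, ∑ j ∈ A with i < j, Biv n θ i j := by
  simp only [Biv]
  rw [sum_sum_filter_lt, sum_sum_filter_eq_sum_card_mul]
  refine mul_sum_filter_le_sum_mul hθ _ (fun _ => by positivity) fun c hc => ?_
  rw [filter_filter, card_filter_lt_and_eq_choose_two A (c · = true)]
  exact mod_cast Nat.choose_le_choose 2 (sub_le_card_filter_of_card_compl_le hc hA)

end Bounds

theorem stmt_7_general (n k : ℕ) (hk2 : 2 ≤ k) (p : Fin n → ℝ)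
    (S1 S2 : ℕ → ℝ)
    (hS1 : ∀ r, S1 r = ∑ i ∈ Finset.univ.filter (fun i : Fin n => (i : ℕ) < n - r), p i)
    (hS2 : ∀ r, S2 r = ∑ i ∈ Finset.univ.filter (fun i : Fin n => (i : ℕ) < n - r),
      ∑ j ∈ Finset.univ.filter (fun j : Fin n => i < j ∧ (j : ℕ) < n - r), p i * p j)
    (θ : (Fin n → Bool) → ℝ) (hθ : PairwiseIndep n p θ) :
    (∀ r1 : ℕ, r1 ≤ k - 1 →
      probGE n θ k ≤ S1 r1 / ((k : ℝ) - r1)) ∧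
    (∀ r2 : ℕ, r2 ≤ k - 2 →
      probGE n θ k ≤ S2 r2 / (((k : ℝ) - r2) * ((k : ℝ) - r2 - 1) / 2)) := by
  obtain ⟨⟨hθ0, -⟩, hmarg, hbiv⟩ := hθ
  refine ⟨fun r hr => ?_, fun r hr => ?_⟩
  · have hdiff : ((k - r : ℕ) : ℝ) = k - r := Nat.cast_sub (by omega)
    have hpos : (0 : ℝ) < k - r := by rw [← hdiff]; exact_mod_cast Nat.sub_pos_of_lt (by omega)
    rw [le_div_iff₀' hpos, ← hdiff, hS1]
    simpa only [hmarg] using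
      mul_probGE_le_sum_marg hθ0 (k := k) (card_compl_filter_val_lt_le n r)
  · have hchoose : (((k - r).choose 2 : ℕ) : ℝ) = (k - r) * (k - r - 1) / 2 := by
      rw [Nat.cast_choose_two, Nat.cast_sub (by omega)]
    have hpos : (0 : ℝ) < (k - r) * (k - r - 1) / 2 := by
      rw [← hchoose]; exact_mod_cast Nat.choose_pos (by omega)
    rw [le_div_iff₀' hpos, ← hchoose, hS2]
    refine (choose_two_mul_probGE_le_sum_biv hθ0 (card_compl_filter_val_lt_le n r)).trans_eq
      (sum_congr rfl fun i _ => ?_)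
    rw [filter_filter]
    exact sum_congr (filter_congr fun _ _ => and_comm)
      fun j hj => hbiv i j (mem_filter.mp hj).2.1

theorem stmt_7 (n k : ℕ) (hn : 2 ≤ n) (hk2 : 2 ≤ k) (hkn : k ≤ n) (p : Fin n → ℝ)
    (hp0 : ∀ i, 0 ≤ p i) (hp1 : ∀ i, p i ≤ 1) (hmono : Monotone p)
    (S1 S2 : ℕ → ℝ)
    (hS1 : ∀ r, S1 r = ∑ i ∈ Finset.univ.filter (fun i : Fin n => (i : ℕ) < n - r), p i)
    (hS2 : ∀ r, S2 r = ∑ i ∈ Finset.univ.filter (fun i : Fin n => (i : ℕ) < n - r),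
      ∑ j ∈ Finset.univ.filter (fun j : Fin n => i < j ∧ (j : ℕ) < n - r), p i * p j)
    (θ : (Fin n → Bool) → ℝ) (hθ : PairwiseIndep n p θ) :
    (∀ r1 : ℕ, r1 ≤ k - 1 →
      probGE n θ k ≤ S1 r1 / ((k : ℝ) - r1)) ∧
    (∀ r2 : ℕ, r2 ≤ k - 2 →
      probGE n θ k ≤ S2 r2 / (((k : ℝ) - r2) * ((k : ℝ) - r2 - 1) / 2)) :=
  stmt_7_general n k hk2 p S1 S2 hS1 hS2 θ hθ
end
end

section
/- Let n ≥ 2, let k be an integer with 2 ≤ k ≤ n, and let p = (p_1,…,p_n) ∈ [0,1]^n with 0 ≤ p_1 ≤ p_2 ≤ … ≤ p_n ≤ 1. Let r be an integer with 0 ≤ r ≤ k−1 satisfying S_{1r} + r ≤ k, and set σ_r = S_{1r} − (S_{1r}^2 − 2 S_{2r}) (which equals ∑_{i=1}^{n−r} p_i(1−p_i)). If σ_r + (k − r − S_{1r})^2 > 0, then for every pairwise independent distribution θ with marginal vector p, P_θ(∑_{i=1}^n c_i ≥ k) ≤ σ_r / ( σ_r + (k − r − S_{1r})^2 ). -/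
open Finset

noncomputable section

-- card of initial segment of Fin n
lemma card_initial (n m : ℕ) (h : m ≤ n) :
    (Finset.univ.filter (fun i : Fin n => (i : ℕ) < m)).card = m := by
  have : Finset.univ.filter (fun i : Fin n => (i : ℕ) < m)
      = Finset.map (Fin.castLEEmb h) Finset.univ := by
    ext i
    simp only [mem_filter, mem_univ, true_and, Finset.mem_map, Fin.castLEEmb]
    constructor
    · intro hi; exact ⟨⟨i, hi⟩, rfl⟩
    · rintro ⟨j, rfl⟩; exact j.2
  rw [this]; simp

-- Marg as a full sum
lemma marg_eq (n : ℕ) (θ : (Fin n → Bool) → ℝ) (i : Fin n) :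
    Marg n θ i = ∑ c : Fin n → Bool, θ c * (if c i = true then (1:ℝ) else 0) := by
  rw [Marg, Finset.sum_filter]
  exact Finset.sum_congr rfl fun c _ => by by_cases h : c i = true <;> simp [h]

lemma biv_eq (n : ℕ) (θ : (Fin n → Bool) → ℝ) (i j : Fin n) :
    Biv n θ i j = ∑ c : Fin n → Bool,
      θ c * ((if c i = true then (1:ℝ) else 0) * (if c j = true then (1:ℝ) else 0)) := by
  rw [Biv, Finset.sum_filter]
  refine Finset.sum_congr rfl fun c _ => ?_
  by_cases h : c i = true <;> by_cases h' : c j = true <;> simp [h, h']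

lemma biv_symm (n : ℕ) (θ : (Fin n → Bool) → ℝ) (i j : Fin n) :
    Biv n θ i j = Biv n θ j i := by
  unfold Biv
  exact Finset.sum_congr (by ext c; simp [and_comm]) fun _ _ => rfl

lemma biv_diag (n : ℕ) (θ : (Fin n → Bool) → ℝ) (i : Fin n) :
    Biv n θ i i = Marg n θ i := by
  unfold Biv Marg
  exact Finset.sum_congr (by ext c; simp) fun _ _ => rfl

theorem stmt_8 (n k r : ℕ) (hn : 2 ≤ n) (hk2 : 2 ≤ k) (hkn : k ≤ n) (hr : r ≤ k - 1)
    (p : Fin n → ℝ)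
    (hp0 : ∀ i, 0 ≤ p i) (hp1 : ∀ i, p i ≤ 1) (hmono : Monotone p)
    (S1 S2 σ : ℝ)
    (hS1 : S1 = ∑ i ∈ Finset.univ.filter (fun i : Fin n => (i : ℕ) < n - r), p i)
    (hS2 : S2 = ∑ i ∈ Finset.univ.filter (fun i : Fin n => (i : ℕ) < n - r),
      ∑ j ∈ Finset.univ.filter (fun j : Fin n => i < j ∧ (j : ℕ) < n - r), p i * p j)
    (hσ : σ = S1 - (S1 ^ 2 - 2 * S2))
    (hSk : S1 + (r : ℝ) ≤ (k : ℝ))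
    (hpos : 0 < σ + ((k : ℝ) - r - S1) ^ 2)
    (θ : (Fin n → Bool) → ℝ) (hθ : PairwiseIndep n p θ) :
    probGE n θ k ≤ σ / (σ + ((k : ℝ) - r - S1) ^ 2) := by
  obtain ⟨⟨hθ0, hθ1⟩, hmarg, hbiv2⟩ := hθ
  set m := n - r with hm
  have hrn : r ≤ n := le_trans (le_trans hr (Nat.sub_le k 1)) hkn
  have hmn : m ≤ n := Nat.sub_le n r
  set T : Finset (Fin n) := Finset.univ.filter (fun i : Fin n => (i : ℕ) < m) with hT
  set X : (Fin n → Bool) → ℝ :=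
    fun c => ∑ i ∈ T, (if c i = true then (1:ℝ) else 0) with hX
  have hbiv : ∀ i j : Fin n, i ≠ j → Biv n θ i j = p i * p j := by
    intro i j hij
    rcases lt_or_gt_of_ne hij with h | h
    · exact hbiv2 i j h
    · rw [biv_symm, hbiv2 j i h, mul_comm]
  -- first moment
  have he1 : ∑ c : Fin n → Bool, θ c * X c = S1 := by
    simp only [hX, Finset.mul_sum]
    rw [Finset.sum_comm, hS1]
    exact Finset.sum_congr rfl fun i _ => by rw [← marg_eq, hmarg]
  -- second moment, step 1: as a double sum of Biv
  have hB : ∑ c : Fin n → Bool, θ c * X c ^ 2 = ∑ i ∈ T, ∑ j ∈ T, Biv n θ i j := by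
    have hpt : ∀ c : Fin n → Bool, θ c * X c ^ 2 = ∑ i ∈ T, ∑ j ∈ T,
        θ c * ((if c i = true then (1:ℝ) else 0) * (if c j = true then (1:ℝ) else 0)) := by
      intro c
      simp only [hX, sq, Finset.sum_mul_sum, Finset.mul_sum]
      refine Finset.sum_congr rfl fun i _ => ?_
      rw [Finset.sum_mul, Finset.mul_sum]
      exact Finset.sum_congr rfl fun j _ => by ring
    rw [Finset.sum_congr rfl fun c _ => hpt c, Finset.sum_comm]
    refine Finset.sum_congr rfl fun i _ => ?_
    rw [Finset.sum_comm]
    exact Finset.sum_congr rfl fun j _ => (biv_eq n θ i j).symm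
  -- trichotomy decomposition of p i * p j sums
  have htri : ∀ (i j : Fin n), p i * p j =
      (if j = i then p i * p j else 0) + (if i < j then p i * p j else 0) +
        (if j < i then p i * p j else 0) := by
    intro i j
    rcases lt_trichotomy i j with h | h | h
    · simp [h, h.ne', lt_asymm h]
    · subst h; simp [lt_irrefl]
    · simp [h, h.ne, lt_asymm h]
  have hswap : ∑ i ∈ T, ∑ j ∈ T, (if j < i then p i * p j else 0)
      = ∑ i ∈ T, ∑ j ∈ T, (if i < j then p i * p j else 0) := by
    rw [Finset.sum_comm]
    refine Finset.sum_congr rfl fun x _ => Finset.sum_congr rfl fun y _ => ?_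
    split_ifs with h
    · ring
    · rfl
  have hS2' : ∑ i ∈ T, ∑ j ∈ T, (if i < j then p i * p j else 0) = S2 := by
    rw [hS2]
    refine Finset.sum_congr rfl fun i _ => ?_
    rw [hT, Finset.sum_filter, Finset.sum_filter]
    refine Finset.sum_congr rfl fun j _ => ?_
    by_cases h1 : (j:ℕ) < m <;> by_cases h2 : i < j <;> simp [h1, h2]
  have hS1sq : S1 * S1 = (∑ i ∈ T, p i * p i) + 2 * S2 := by
    calc S1 * S1 = ∑ i ∈ T, ∑ j ∈ T, p i * p j := by rw [hS1, Finset.sum_mul_sum]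
    _ = ∑ i ∈ T, ∑ j ∈ T, ((if j = i then p i * p j else 0) +
          (if i < j then p i * p j else 0) + (if j < i then p i * p j else 0)) :=
        Finset.sum_congr rfl fun i _ => Finset.sum_congr rfl fun j _ => htri i j
    _ = (∑ i ∈ T, ∑ j ∈ T, (if j = i then p i * p j else 0)) +
          (∑ i ∈ T, ∑ j ∈ T, (if i < j then p i * p j else 0)) +
          (∑ i ∈ T, ∑ j ∈ T, (if j < i then p i * p j else 0)) := by
        simp [Finset.sum_add_distrib]
    _ = (∑ i ∈ T, p i * p i) + 2 * S2 := by
        rw [hswap, hS2']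
        have : ∀ i ∈ T, ∑ j ∈ T, (if j = i then p i * p j else 0) = p i * p i := by
          intro i hi
          rw [Finset.sum_ite_eq' T i (fun j => p i * p j)]
          simp [hi]
        rw [Finset.sum_congr rfl this]
        ring
  -- second moment value
  have he2 : ∑ c : Fin n → Bool, θ c * X c ^ 2 = S1 + 2 * S2 := by
    rw [hB]
    have hsplit : ∀ i ∈ T, ∑ j ∈ T, Biv n θ i j
        = (∑ j ∈ T, p i * p j) + (p i - p i * p i) := by
      intro i hi
      have : ∀ j ∈ T, Biv n θ i j = p i * p j + (if j = i then p i - p i * p i else 0) := by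
        intro j _
        by_cases h : j = i
        · subst h; rw [biv_diag, hmarg]; simp
        · rw [hbiv i j (Ne.symm h)]; simp [h]
      rw [Finset.sum_congr rfl this, Finset.sum_add_distrib,
        Finset.sum_ite_eq' T i (fun _ => p i - p i * p i)]
      simp [hi]
    rw [Finset.sum_congr rfl hsplit, Finset.sum_add_distrib]
    have h1 : ∑ i ∈ T, ∑ j ∈ T, p i * p j = S1 * S1 := by rw [hS1, Finset.sum_mul_sum]
    have h2 : ∑ i ∈ T, (p i - p i * p i) = S1 - ∑ i ∈ T, p i * p i := by
      rw [Finset.sum_sub_distrib, hS1]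
    rw [h1, h2]
    linarith [hS1sq]
  -- event implies X is large
  have hXge : ∀ c : Fin n → Bool,
      k ≤ (Finset.univ.filter (fun i => c i = true)).card → (k:ℝ) - r ≤ X c := by
    intro c hc
    have hXc : X c = ((T.filter (fun i => c i = true)).card : ℝ) := by
      simp [hX, Finset.sum_boole]
    have hcompl : (Finset.univ.filter (fun i : Fin n => ¬ (i:ℕ) < m)).card = r := by
      have htot := Finset.card_filter_add_card_filter_not
        (s := (Finset.univ : Finset (Fin n))) (p := fun i : Fin n => (i:ℕ) < m)
      have hcm : (Finset.univ.filter (fun i : Fin n => (i:ℕ) < m)).card = m :=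
        card_initial n m hmn
      have hcard_univ : (Finset.univ : Finset (Fin n)).card = n := by simp
      omega
    have hkey : (Finset.univ.filter (fun i => c i = true)).card
        ≤ (T.filter (fun i => c i = true)).card + r := by
      have htot := Finset.card_filter_add_card_filter_not
        (s := Finset.univ.filter (fun i => c i = true)) (p := fun i : Fin n => (i:ℕ) < m)
      have heq : (Finset.univ.filter (fun i => c i = true)).filter (fun i : Fin n => (i:ℕ) < m)
          = T.filter (fun i => c i = true) := by
        rw [hT, Finset.filter_comm]
      have heqc := congrArg Finset.card heq
      have hsub : ((Finset.univ.filter (fun i => c i = true)).filter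
            (fun i : Fin n => ¬ (i:ℕ) < m)).card
          ≤ (Finset.univ.filter (fun i : Fin n => ¬ (i:ℕ) < m)).card := by
        apply Finset.card_le_card
        intro x hx
        simp only [Finset.mem_filter] at hx ⊢
        exact ⟨Finset.mem_univ x, hx.2⟩
      omega
    have : k ≤ (T.filter (fun i => c i = true)).card + r := le_trans hc hkey
    have : (k:ℝ) ≤ ((T.filter (fun i => c i = true)).card : ℝ) + r := by exact_mod_cast this
    rw [hXc]; linarith
  -- abbreviations
  set a : ℝ := (k:ℝ) - (r:ℝ) - S1 with hadef
  have ha : 0 ≤ a := by rw [hadef]; linarith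
  have hg : ∑ c : Fin n → Bool, θ c * (a * (X c - S1) + σ) ^ 2 = σ * (σ + a ^ 2) := by
    have expand : ∀ c : Fin n → Bool, θ c * (a * (X c - S1) + σ) ^ 2 =
        a ^ 2 * (θ c * X c ^ 2) + (2 * a * σ - 2 * a ^ 2 * S1) * (θ c * X c) +
          (a ^ 2 * S1 ^ 2 - 2 * a * σ * S1 + σ ^ 2) * θ c := fun c => by ring
    rw [Finset.sum_congr rfl fun c _ => expand c]
    rw [Finset.sum_add_distrib, Finset.sum_add_distrib, ← Finset.mul_sum, ← Finset.mul_sum,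
      ← Finset.mul_sum, he1, he2, hθ1, hσ]
    ring
  have hnneg : ∀ c, 0 ≤ θ c * (a * (X c - S1) + σ) ^ 2 :=
    fun c => mul_nonneg (hθ0 c) (sq_nonneg _)
  have hDsq : (σ + a ^ 2) ^ 2 * probGE n θ k ≤ σ * (σ + a ^ 2) := by
    rw [probGE, Finset.mul_sum]
    calc ∑ c ∈ Finset.univ.filter
          (fun c : Fin n → Bool => k ≤ (Finset.univ.filter (fun i => c i = true)).card),
            (σ + a ^ 2) ^ 2 * θ c
        ≤ ∑ c ∈ Finset.univ.filter
          (fun c : Fin n → Bool => k ≤ (Finset.univ.filter (fun i => c i = true)).card),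
            θ c * (a * (X c - S1) + σ) ^ 2 := by
          apply Finset.sum_le_sum
          intro c hc
          rw [Finset.mem_filter] at hc
          have hx : (k:ℝ) - r ≤ X c := hXge c hc.2
          have h1 : σ + a ^ 2 ≤ a * (X c - S1) + σ := by nlinarith
          have h2 : (σ + a ^ 2) ^ 2 ≤ (a * (X c - S1) + σ) ^ 2 :=
            pow_le_pow_left₀ hpos.le h1 2
          rw [mul_comm ((σ + a ^ 2) ^ 2) (θ c)]
          exact mul_le_mul_of_nonneg_left h2 (hθ0 c)
      _ ≤ ∑ c : Fin n → Bool, θ c * (a * (X c - S1) + σ) ^ 2 :=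
          Finset.sum_le_sum_of_subset_of_nonneg (Finset.filter_subset _ _)
            (fun c _ _ => hnneg c)
      _ = σ * (σ + a ^ 2) := hg
  rw [le_div_iff₀ hpos]
  have := mul_le_mul_of_nonneg_left hDsq (le_of_lt hpos)
  nlinarith [hDsq, hpos]
end
end

section
/- Let n ≥ 2, let k be an integer with 2 ≤ k ≤ n, and let p = (p_1,…,p_n) ∈ [0,1]^n with 0 ≤ p_1 ≤ p_2 ≤ … ≤ p_n ≤ 1. Let r be an integer with 0 ≤ r ≤ k−1 and suppose S_{1r} > 0. Then for every pairwise independent distribution θ with marginal vector p: (i) if n − r − S_{1r} > 0 and ((n−r−1)·S_{1r} − 2·S_{2r})/(n − r − S_{1r}) ≤ k − r < 1 + 2·S_{2r}/S_{1r}, then P_θ(∑_{i=1}^n c_i ≥ k) ≤ ( (k + n − 2r − 1)·S_{1r} − 2·S_{2r} ) / ( (k−r)(n−r) ); and (ii) if k − r ≥ 1 + 2·S_{2r}/S_{1r} and k − r − S_{1r} > 0, then with i = ⌈( (k−r−1)·S_{1r} − 2·S_{2r} ) / ( k − r − S_{1r} )⌉, P_θ(∑_{i=1}^n c_i ≥ k)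 ≤ ( (i−1)(i − 2·S_{1r}) + 2·S_{2r} ) / ( (k−r−i)^2 + (k−r−i) ). -/
open Finset

noncomputable section

/-! Let `Y` count the ones among the `n - r` coordinates with the smallest marginals; at least `k`
ones in total force `Y ≥ k - r`. Pairwise independence pins down the binomial moments
`E[Y] = S₁` and `E[Y (Y - 1)] = 2 S₂`, so every quadratic `g` that is nonnegative on `{0, …, n - r}`
and at least `1` on `{k - r, …, n - r}` bounds the tail by `E[g(Y)]`, a function of `S₁, S₂`.
Bound (i) takes `g(y) = y (m + N - y) / (m N)` with `m = k - r`, `N = n - r`; bound (ii) takes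
`g(y) = (y - i) (y - i + 1) / ((m - i) (m - i + 1))`, valid for every integer `i < m`. That the
ceiling `i` of (ii) is below `m` follows from `E[(Y - m + 1) (Y - m)] ≥ 0`, again since `Y` is
integer-valued. -/

theorem sq_sum_eq_sum_sq_add_two_mul_sum_lt {ι R : Type*} [LinearOrder ι] [CommSemiring R]
    (s : Finset ι) (f : ι → R) :
    (∑ i ∈ s, f i) ^ 2 = ∑ i ∈ s, f i ^ 2 + 2 * ∑ i ∈ s, ∑ j ∈ s with i < j, f i * f j := by
  induction s using Finset.induction_on_max with
  | empty => simp
  | insert a s ha ih =>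
    have ha' : a ∉ s := fun h => lt_irrefl a (ha a h)
    have hnil : ({j ∈ insert a s | a < j} : Finset ι) = ∅ :=
      filter_eq_empty_iff.2 fun j hj => by
        rcases mem_insert.1 hj with rfl | hj
        exacts [lt_irrefl j, (ha j hj).not_gt]
    have hlt : ∑ i ∈ s, ∑ j ∈ insert a s with i < j, f i * f j
        = ∑ i ∈ s, ∑ j ∈ s with i < j, f i * f j + (∑ i ∈ s, f i) * f a := by
      rw [sum_mul, ← sum_add_distrib]
      refine sum_congr rfl fun i hi => ?_
      rw [filter_insert, if_pos (ha i hi), sum_insert (by simp [ha']), add_comm]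
    rw [sum_insert ha', sum_insert ha', sum_insert ha', hnil, sum_empty, zero_add, hlt, add_sq, ih]
    ring

theorem card_filter_mul_card_filter_sub_one {ι R : Type*} [LinearOrder ι] [CommRing R]
    (s : Finset ι) (P : ι → Prop) [DecidablePred P] :
    (#{i ∈ s | P i} : R) * (#{i ∈ s | P i} - 1)
      = 2 * ∑ i ∈ s, ∑ j ∈ s with i < j, if P i ∧ P j then 1 else 0 := by
  have h := sq_sum_eq_sum_sq_add_two_mul_sum_lt s fun i => if P i then (1 : R) else 0
  simp only [ite_pow, one_pow, ne_eq, OfNat.ofNat_ne_zero, not_false_eq_true, zero_pow,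
    ite_zero_mul_ite_zero, mul_one] at h
  rw [card_filter]
  push_cast
  linear_combination h

/-- `s₁` and `s₂` are the binomial moments `E[Y]` and `E[Y.choose 2]` under the probability
weights `θ`. -/
structure HasBinomialMoments {Ω : Type*} [Fintype Ω] (θ : Ω → ℝ) (Y : Ω → ℕ) (N : ℕ)
    (s₁ s₂ : ℝ) : Prop where
  nonneg : ∀ ω, 0 ≤ θ ω
  sum_eq_one : ∑ ω, θ ω = 1
  le : ∀ ω, Y ω ≤ N
  sum_mul_eq : ∑ ω, θ ω * Y ω = s₁
  sum_mul_mul_pred_eq : ∑ ω, θ ω * (Y ω * (Y ω - 1)) = 2 * s₂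

namespace HasBinomialMoments

variable {Ω : Type*} [Fintype Ω] {θ : Ω → ℝ} {Y : Ω → ℕ} {N : ℕ} {s₁ s₂ : ℝ}

theorem sum_mul_quadratic (h : HasBinomialMoments θ Y N s₁ s₂) (a b c : ℝ) :
    ∑ ω, θ ω * (a + b * Y ω + c * (Y ω * (Y ω - 1))) = a + b * s₁ + c * (2 * s₂) := by
  have hexp : ∀ ω, θ ω * (a + b * Y ω + c * (Y ω * (Y ω - 1)))
      = a * θ ω + b * (θ ω * Y ω) + c * (θ ω * (Y ω * (Y ω - 1))) := fun ω => by ring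
  simp only [hexp, sum_add_distrib, ← mul_sum, h.sum_eq_one, h.sum_mul_eq,
    h.sum_mul_mul_pred_eq, mul_one]

theorem two_mul_intCast_mul_le (h : HasBinomialMoments θ Y N s₁ s₂) (q : ℤ) :
    2 * q * s₁ ≤ q * (q + 1) + 2 * s₂ := by
  -- `E[(Y - q) (Y - q - 1)] ≥ 0` because `Y` is integer-valued
  have hq : ∀ y : ℕ, 0 ≤ (q * (q + 1) : ℝ) + -2 * q * y + 1 * (y * (y - 1)) := fun y => by
    have := Int.cast_le (R := ℝ).2 (Int.le_self_sq (y - q))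
    push_cast at this
    nlinarith
  have := sum_nonneg fun ω (_ : ω ∈ univ) => mul_nonneg (h.nonneg ω) (hq (Y ω))
  rw [h.sum_mul_quadratic] at this
  linarith

theorem sum_filter_le_div_of_quadratic (h : HasBinomialMoments θ Y N s₁ s₂) {m : ℕ}
    {a b c D : ℝ} (hD : 0 < D) (h₀ : ∀ y ≤ N, 0 ≤ a + b * y + c * (y * (y - 1)))
    (h₁ : ∀ y : ℕ, m ≤ y → y ≤ N → D ≤ a + b * y + c * (y * (y - 1))) :
    ∑ ω with m ≤ Y ω, θ ω ≤ (a + b * s₁ + c * (2 * s₂)) / D := by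
  rw [le_div_iff₀ hD, sum_mul, ← h.sum_mul_quadratic]
  calc ∑ ω with m ≤ Y ω, θ ω * D
      ≤ ∑ ω with m ≤ Y ω, θ ω * (a + b * Y ω + c * (Y ω * (Y ω - 1))) :=
        sum_le_sum fun ω hω =>
          mul_le_mul_of_nonneg_left (h₁ _ (mem_filter.1 hω).2 (h.le ω)) (h.nonneg ω)
    _ ≤ ∑ ω, θ ω * (a + b * Y ω + c * (Y ω * (Y ω - 1))) :=
        sum_le_sum_of_subset_of_nonneg (filter_subset _ _) fun ω _ _ =>
          mul_nonneg (h.nonneg ω) (h₀ _ (h.le ω))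

theorem sum_filter_le_of_pos_of_le (h : HasBinomialMoments θ Y N s₁ s₂) {m : ℕ} (hm : 0 < m)
    (hmN : m ≤ N) :
    ∑ ω with m ≤ Y ω, θ ω ≤ ((m + N - 1) * s₁ - 2 * s₂) / (m * N) := by
  have hm' : (0 : ℝ) < m := by exact_mod_cast hm
  have hN : (0 : ℝ) < N := by exact_mod_cast hm.trans_le hmN
  have h₀ : ∀ y ≤ N, (0 : ℝ) ≤ 0 + (m + N - 1) * y + -1 * (y * (y - 1)) := fun y hy => by
    have : (y : ℝ) ≤ N := by exact_mod_cast hy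
    nlinarith
  have h₁ : ∀ y : ℕ, m ≤ y → y ≤ N → (m * N : ℝ) ≤ 0 + (m + N - 1) * y + -1 * (y * (y - 1)) :=
    fun y hmy hy => by
      have : (y : ℝ) ≤ N := by exact_mod_cast hy
      have : (m : ℝ) ≤ y := by exact_mod_cast hmy
      nlinarith
  refine (h.sum_filter_le_div_of_quadratic (by positivity) h₀ h₁).trans_eq ?_
  ring

theorem sum_filter_le_of_intCast_lt (h : HasBinomialMoments θ Y N s₁ s₂) {m : ℕ} {i : ℤ}
    (hi : i < m) :
    ∑ ω with m ≤ Y ω, θ ω ≤ ((i - 1) * (i - 2 * s₁) + 2 * s₂) / ((m - i) ^ 2 + (m - i)) := by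
  have hi' : (i : ℝ) + 1 ≤ m := by exact_mod_cast hi
  have h₀ : ∀ y ≤ N, (0 : ℝ) ≤ i * (i - 1) + -2 * (i - 1) * y + 1 * (y * (y - 1)) := fun y _ => by
    have := Int.cast_le (R := ℝ).2 (Int.le_self_sq (y - i + 1))
    push_cast at this
    nlinarith
  have h₁ : ∀ y : ℕ, m ≤ y → y ≤ N →
      ((m - i) ^ 2 + (m - i) : ℝ) ≤ i * (i - 1) + -2 * (i - 1) * y + 1 * (y * (y - 1)) :=
    fun y hmy _ => by
      have : (m : ℝ) ≤ y := by exact_mod_cast hmy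
      nlinarith
  refine (h.sum_filter_le_div_of_quadratic (by nlinarith) h₀ h₁).trans_eq ?_
  ring

theorem ceil_le_sub_one (h : HasBinomialMoments θ Y N s₁ s₂) {m : ℕ} (hs₁ : s₁ < m) :
    ⌈((m - 1) * s₁ - 2 * s₂) / (m - s₁)⌉ ≤ (m : ℤ) - 1 := by
  have := h.two_mul_intCast_mul_le (m - 1)
  rw [Int.ceil_le, div_le_iff₀ (sub_pos.2 hs₁)]
  push_cast at this ⊢
  nlinarith

end HasBinomialMoments

section Configurations

variable {n : ℕ}

theorem sum_mul_card_filter_eq_sum_marg (θ : (Fin n → Bool) → ℝ) (T : Finset (Fin n)) :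
    ∑ c, θ c * #{i ∈ T | c i = true} = ∑ i ∈ T, Marg n θ i := by
  simp only [card_filter, Nat.cast_sum, Nat.cast_ite, Nat.cast_one, Nat.cast_zero, mul_sum,
    mul_ite, mul_one, mul_zero]
  rw [sum_comm]
  simp only [Marg, sum_filter]

theorem sum_mul_card_filter_mul_pred_eq_sum_biv (θ : (Fin n → Bool) → ℝ) (T : Finset (Fin n)) :
    ∑ c, θ c * (#{i ∈ T | c i = true} * (#{i ∈ T | c i = true} - 1))
      = 2 * ∑ i ∈ T, ∑ j ∈ T with i < j, Biv n θ i j := by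
  simp only [card_filter_mul_card_filter_sub_one, mul_sum, mul_ite, mul_one, mul_zero]
  rw [sum_comm]
  refine sum_congr rfl fun i _ => ?_
  rw [sum_comm]
  refine sum_congr rfl fun j _ => ?_
  rw [Biv, sum_filter, mul_sum]
  exact sum_congr rfl fun c _ => by split_ifs <;> ring

theorem PairwiseIndep.hasBinomialMoments {p : Fin n → ℝ} {θ : (Fin n → Bool) → ℝ}
    (hθ : PairwiseIndep n p θ) (T : Finset (Fin n)) :
    HasBinomialMoments θ (fun c => #{i ∈ T | c i = true}) #T (∑ i ∈ T, p i)
      (∑ i ∈ T, ∑ j ∈ T with i < j, p i * p j) where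
  nonneg := hθ.1.1
  sum_eq_one := hθ.1.2
  le _ := card_filter_le _ _
  sum_mul_eq := by
    rw [sum_mul_card_filter_eq_sum_marg]
    exact sum_congr rfl fun i _ => hθ.2.1 i
  sum_mul_mul_pred_eq := by
    rw [sum_mul_card_filter_mul_pred_eq_sum_biv]
    exact congrArg (2 * ·) <| sum_congr rfl fun i _ =>
      sum_congr rfl fun j hj => hθ.2.2 i j (mem_filter.1 hj).2

theorem probGE_le_sum_filter {θ : (Fin n → Bool) → ℝ} (hθ : ∀ c, 0 ≤ θ c) (T : Finset (Fin n))
    (k : ℕ) : probGE n θ k ≤ ∑ c with k - #Tᶜ ≤ #{i ∈ T | c i = true}, θ c := by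
  refine sum_le_sum_of_subset_of_nonneg (monotone_filter_right _ fun c hk => ?_)
    fun c _ _ => hθ c
  have : #{i | c i = true} ≤ #{i ∈ T | c i = true} + #Tᶜ :=
    (card_le_card fun i hi => by by_cases hT : i ∈ T <;> simp_all).trans (card_union_le _ _)
  omega

end Configurations

theorem stmt_9_general (n k r : ℕ) (hk2 : 2 ≤ k) (hkn : k ≤ n) (hr : r ≤ k - 1)
    (p : Fin n → ℝ)
    (S1 S2 : ℝ)
    (hS1 : S1 = ∑ i ∈ Finset.univ.filter (fun i : Fin n => (i : ℕ) < n - r), p i)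
    (hS2 : S2 = ∑ i ∈ Finset.univ.filter (fun i : Fin n => (i : ℕ) < n - r),
      ∑ j ∈ Finset.univ.filter (fun j : Fin n => i < j ∧ (j : ℕ) < n - r), p i * p j)
    (θ : (Fin n → Bool) → ℝ) (hθ : PairwiseIndep n p θ) :
    ((0 < (n : ℝ) - r - S1 →
      (((n : ℝ) - r - 1) * S1 - 2 * S2) / ((n : ℝ) - r - S1) ≤ (k : ℝ) - r →
      (k : ℝ) - r < 1 + 2 * S2 / S1 →
      probGE n θ k ≤
        (((k : ℝ) + n - 2 * r - 1) * S1 - 2 * S2) / (((k : ℝ) - r) * ((n : ℝ) - r)))) ∧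
    ((1 + 2 * S2 / S1 ≤ (k : ℝ) - r →
      0 < (k : ℝ) - r - S1 →
      ∀ ic : ℤ, ic = ⌈(((k : ℝ) - r - 1) * S1 - 2 * S2) / ((k : ℝ) - r - S1)⌉ →
      probGE n θ k ≤
        (((ic : ℝ) - 1) * ((ic : ℝ) - 2 * S1) + 2 * S2) /
          (((k : ℝ) - r - ic) ^ 2 + ((k : ℝ) - r - ic)))) := by
  set T : Finset (Fin n) := {i | (i : ℕ) < n - r}
  have hT : #T = n - r := by rw [Fin.card_filter_val_lt]; omega
  have hTc : #Tᶜ = r := by rw [card_compl, hT, Fintype.card_fin]; omega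
  have hS2T : S2 = ∑ i ∈ T, ∑ j ∈ T with i < j, p i * p j := by
    simp only [hS2, T, filter_filter, and_comm]
  have hmom := hθ.hasBinomialMoments T
  rw [← hS1, ← hS2T, hT] at hmom
  have hP := hTc ▸ probGE_le_sum_filter hθ.1.1 T k
  have hm : ((k - r : ℕ) : ℝ) = k - r := by push_cast [show r ≤ k by omega]; ring
  have hN : ((n - r : ℕ) : ℝ) = n - r := by push_cast [show r ≤ n by omega]; ring
  refine ⟨fun _ _ _ => ?_, fun _ hlt ic hic => ?_⟩
  · refine hP.trans ((hmom.sum_filter_le_of_pos_of_le (by omega) (by omega)).trans_eq ?_)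
    rw [hm, hN]
    ring
  · rw [← hm] at hlt hic ⊢
    exact hP.trans (hmom.sum_filter_le_of_intCast_lt
      (hic ▸ (hmom.ceil_le_sub_one (sub_pos.1 hlt)).trans_lt (sub_one_lt _)))

theorem stmt_9 (n k r : ℕ) (hn : 2 ≤ n) (hk2 : 2 ≤ k) (hkn : k ≤ n) (hr : r ≤ k - 1)
    (p : Fin n → ℝ)
    (hp0 : ∀ i, 0 ≤ p i) (hp1 : ∀ i, p i ≤ 1) (hmono : Monotone p)
    (S1 S2 : ℝ)
    (hS1 : S1 = ∑ i ∈ Finset.univ.filter (fun i : Fin n => (i : ℕ) < n - r), p i)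
    (hS2 : S2 = ∑ i ∈ Finset.univ.filter (fun i : Fin n => (i : ℕ) < n - r),
      ∑ j ∈ Finset.univ.filter (fun j : Fin n => i < j ∧ (j : ℕ) < n - r), p i * p j)
    (hS1pos : 0 < S1)
    (θ : (Fin n → Bool) → ℝ) (hθ : PairwiseIndep n p θ) :
    ((0 < (n : ℝ) - r - S1 →
      (((n : ℝ) - r - 1) * S1 - 2 * S2) / ((n : ℝ) - r - S1) ≤ (k : ℝ) - r →
      (k : ℝ) - r < 1 + 2 * S2 / S1 →
      probGE n θ k ≤
        (((k : ℝ) + n - 2 * r - 1) * S1 - 2 * S2) / (((k : ℝ) - r) * ((n : ℝ) - r)))) ∧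
    ((1 + 2 * S2 / S1 ≤ (k : ℝ) - r →
      0 < (k : ℝ) - r - S1 →
      ∀ ic : ℤ, ic = ⌈(((k : ℝ) - r - 1) * S1 - 2 * S2) / ((k : ℝ) - r - S1)⌉ →
      probGE n θ k ≤
        (((ic : ℝ) - 1) * ((ic : ℝ) - 2 * S1) + 2 * S2) /
          (((k : ℝ) - r - ic) ^ 2 + ((k : ℝ) - r - ic)))) :=
  stmt_9_general n k r hk2 hkn hr p S1 S2 hS1 hS2 θ hθ
end
end

section
/- Let n ≥ 2, let k be an integer with 2 ≤ k ≤ n, and let p = (p_1,…,p_n) ∈ [0,1]^n with 0 ≤ p_1 ≤ p_2 ≤ … ≤ p_n ≤ 1. Then for every pairwise independent distribution θ with marginal vector p, P_θ(∑_{i=1}^n c_i ≥ k) ≤ ∑_{i=1}^{n−k+1} p_i − p_{n−k+1}·( ∑_{i=1}^{n−k} p_i ). -/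
open Finset

noncomputable section

theorem stmt_10 (n k : ℕ) (hn : 2 ≤ n) (hk2 : 2 ≤ k) (hkn : k ≤ n) (p : Fin n → ℝ)
    (hp0 : ∀ i, 0 ≤ p i) (hp1 : ∀ i, p i ≤ 1) (hmono : Monotone p)
    (θ : (Fin n → Bool) → ℝ) (hθ : PairwiseIndep n p θ) :
    probGE n θ k ≤
      (∑ i ∈ Finset.univ.filter (fun i : Fin n => (i : ℕ) < n - k + 1), p i) -
        p ⟨n - k, by omega⟩ *
          ∑ i ∈ Finset.univ.filter (fun i : Fin n => (i : ℕ) < n - k), p i := by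
  obtain ⟨⟨hθ0, hθ1⟩, hmarg, hbiv⟩ := hθ
  set j0 : Fin n := ⟨n - k, by omega⟩ with hj0
  set T : Finset (Fin n) := Finset.univ.filter (fun i : Fin n => (i : ℕ) < n - k) with hT
  set f : (Fin n → Bool) → ℝ := fun c =>
    (∑ i ∈ T, (if c i then (1:ℝ) else 0)) + (if c j0 then (1:ℝ) else 0)
      - (if c j0 then (1:ℝ) else 0) * ∑ i ∈ T, (if c i then (1:ℝ) else 0) with hf
  have hval : (j0 : ℕ) = n - k := rfl
  have htnn : ∀ c : Fin n → Bool, (0:ℝ) ≤ ∑ i ∈ T, (if c i then (1:ℝ) else 0) := by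
    intro c
    exact Finset.sum_nonneg fun i _ => by positivity
  have hfeq : ∀ c : Fin n → Bool,
      f c = if c j0 then 1 else ∑ i ∈ T, (if c i then (1:ℝ) else 0) := by
    intro c
    cases h : c j0 <;> simp [hf, h] <;> ring
  have hfnn : ∀ c, 0 ≤ f c := by
    intro c
    rw [hfeq]
    cases h : c j0 <;> simp [h, htnn c]
  have hf1 : ∀ c : Fin n → Bool,
      k ≤ (Finset.univ.filter (fun i => c i = true)).card → 1 ≤ f c := by
    intro c hc
    rw [hfeq]
    cases h : c j0 with
    | true => simp
    | false =>
      simp only [h, Bool.false_eq_true, if_false]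
      have hex : ∃ i ∈ T, c i = true := by
        by_contra hno
        push_neg at hno
        have hsub : (Finset.univ.filter (fun i => c i = true)) ⊆ Finset.Ioi j0 := by
          intro i hi
          simp only [mem_filter, mem_univ, true_and] at hi
          rw [Finset.mem_Ioi]
          by_contra hlt
          push_neg at hlt
          rcases lt_or_eq_of_le hlt with h1 | h1
          · rw [Fin.lt_def, hval] at h1
            exact hno i (by simp [hT]; omega) hi
          · rw [h1] at hi; simp [h] at hi
        have hcard := Finset.card_le_card hsub
        rw [Fin.card_Ioi, hval] at hcard
        omega
      obtain ⟨i0, hi0, hci0⟩ := hex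
      calc (1:ℝ) = (if c i0 then (1:ℝ) else 0) := by simp [hci0]
        _ ≤ _ := Finset.single_le_sum (f := fun i => if c i then (1:ℝ) else 0)
            (fun i _ => by by_cases hci : c i = true <;> simp [hci]) hi0
  -- Step 1: probGE ≤ ∑ c, θ c * f c
  have step1 : probGE n θ k ≤ ∑ c, θ c * f c := by
    rw [probGE]
    calc ∑ c ∈ Finset.univ.filter
          (fun c : Fin n → Bool => k ≤ (Finset.univ.filter (fun i => c i = true)).card), θ c
        ≤ ∑ c ∈ Finset.univ.filter
          (fun c : Fin n → Bool => k ≤ (Finset.univ.filter (fun i => c i = true)).card),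
            θ c * f c := by
          refine Finset.sum_le_sum fun c hc => ?_
          simp only [mem_filter, mem_univ, true_and] at hc
          nth_rewrite 1 [← mul_one (θ c)]
          exact mul_le_mul_of_nonneg_left (hf1 c hc) (hθ0 c)
      _ ≤ ∑ c, θ c * f c := by
          refine Finset.sum_le_sum_of_subset_of_nonneg (Finset.subset_univ _) ?_
          intro c _ _
          exact mul_nonneg (hθ0 c) (hfnn c)
  -- Marg identity
  have hM : ∀ i : Fin n, (∑ c : Fin n → Bool, θ c * (if c i then (1:ℝ) else 0)) = p i := by
    intro i
    rw [← hmarg i, Marg, Finset.sum_filter]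
    refine Finset.sum_congr rfl fun c _ => ?_
    cases h : c i <;> simp [h]
  have hB : ∀ i ∈ T, (∑ c : Fin n → Bool,
      θ c * ((if c j0 then (1:ℝ) else 0) * (if c i then (1:ℝ) else 0))) = p i * p j0 := by
    intro i hi
    have hlt : i < j0 := by
      simp only [hT, mem_filter, mem_univ, true_and] at hi
      rw [Fin.lt_def, hval]
      omega
    rw [← hbiv i j0 hlt, Biv, Finset.sum_filter]
    refine Finset.sum_congr rfl fun c _ => ?_
    cases h : c i <;> cases h2 : c j0 <;> simp [h, h2]
  -- Step 2: compute ∑ c, θ c * f c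
  have step2 : ∑ c, θ c * f c = (∑ i ∈ T, p i) + p j0 - p j0 * ∑ i ∈ T, p i := by
    have expand : ∀ c, θ c * f c =
        (∑ i ∈ T, θ c * (if c i then (1:ℝ) else 0)) + θ c * (if c j0 then (1:ℝ) else 0)
          - ∑ i ∈ T, θ c * ((if c j0 then (1:ℝ) else 0) * (if c i then (1:ℝ) else 0)) := by
      intro c
      simp only [hf, mul_sub, mul_add, Finset.mul_sum]
    rw [Finset.sum_congr rfl fun c _ => expand c]
    rw [Finset.sum_sub_distrib, Finset.sum_add_distrib, Finset.sum_comm, Finset.sum_comm (s := Finset.univ)]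
    rw [hM j0]
    rw [Finset.sum_congr rfl fun i hi => hM i, Finset.sum_congr rfl fun i hi => hB i hi]
    rw [← Finset.sum_mul, mul_comm]
  -- Step 3: split the target sum
  have step3 : Finset.univ.filter (fun i : Fin n => (i : ℕ) < n - k + 1) = insert j0 T := by
    ext i
    simp only [mem_filter, mem_univ, true_and, mem_insert, hT]
    constructor
    · intro h
      rcases Nat.lt_or_ge (i : ℕ) (n - k) with h1 | h1
      · exact Or.inr (by simpa using h1)
      · exact Or.inl (Fin.ext (by rw [hval]; omega))
    · rintro (h | h)
      · rw [h, hval]; omega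
      · omega
  have hj0T : j0 ∉ T := by simp [hT, hval]
  rw [step3, Finset.sum_insert hj0T]
  calc probGE n θ k ≤ ∑ c, θ c * f c := step1
    _ = (∑ i ∈ T, p i) + p j0 - p j0 * ∑ i ∈ T, p i := step2
    _ = p j0 + ∑ i ∈ T, p i - p j0 * ∑ i ∈ T, p i := by ring
end
end

section
/- Let n ≥ 2, let p ∈ (0,1), and let k be an integer with 1 ≤ k ≤ n and k < (n−1)p. Then there exists a pairwise independent distribution θ with all marginal probabilities equal to p such that P_θ(∑_{i=1}^n c_i ≥ k) = 1; hence the maximum of P_θ(∑_{i=1}^n c_i ≥ k) over all such distributions equals 1. -/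
/-!
Spread a law `q` of the number `S` of ones uniformly over the `C(n, j)` vectors with `j` ones.
For this exchangeable `θ`, `P(c_i = 1 for all i ∈ a) = E[C(S, #a)] / C(n, #a)`, so `θ` is
pairwise independent with marginal `p` as soon as `E S = np` and `E C(S, 2) = C(n, 2) p²`, i.e.
`S` has mean `x = np` and variance `np(1 - p)`. Among laws on `{k, …, n}` with mean `x`, the one
on `{⌊x⌋, ⌊x⌋ + 1}` has variance at most `np(1 - p)`, and the one on `{k, n}` has variance
`(n - x)(x - k) ≥ np(1 - p)` because `k < (n - 1)p`; a mixture of the two has variance exactly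
`np(1 - p)`, and then `S ≥ k` almost surely.
-/

open Finset

noncomputable section

section Exchangeable

variable {n : ℕ}

def ones (c : Fin n → Bool) : Finset (Fin n) := univ.filter (fun i => c i = true)

lemma ones_decide_mem (s : Finset (Fin n)) : ones (fun i => decide (i ∈ s)) = s := by
  ext; simp [ones]

lemma card_filter_subset_ones_mul_choose (a : Finset (Fin n)) (j : ℕ) :
    #{c : Fin n → Bool | a ⊆ ones c ∧ #(ones c) = j} * n.choose #a
      = n.choose j * j.choose #a := by
  by_cases haj : #a ≤ j
  · have hcard : #{c : Fin n → Bool | a ⊆ ones c ∧ #(ones c) = j}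
        = #(powersetCard (j - #a) (univ \ a)) := by
      refine card_nbij' (fun c => ones c \ a) (fun t i => decide (i ∈ t ∪ a)) ?_ ?_ ?_ ?_
      · intro c hc
        rw [mem_coe, mem_filter] at hc
        rw [mem_coe, mem_powersetCard, card_sdiff_of_subset hc.2.1, hc.2.2]
        exact ⟨sdiff_subset_sdiff (subset_univ _) le_rfl, rfl⟩
      · intro t ht
        rw [mem_coe, mem_powersetCard] at ht
        have hdisj : Disjoint t a := disjoint_of_subset_left ht.1 sdiff_disjoint
        rw [mem_coe, mem_filter, ones_decide_mem, card_union_of_disjoint hdisj, ht.2]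
        exact ⟨mem_univ _, subset_union_right, Nat.sub_add_cancel haj⟩
      · intro c hc
        rw [mem_coe, mem_filter] at hc
        funext i
        simp only [sdiff_union_of_subset hc.2.1]
        simp [ones]
      · intro t ht
        rw [mem_coe, mem_powersetCard] at ht
        have hdisj : Disjoint t a := disjoint_of_subset_left ht.1 sdiff_disjoint
        simp only [ones_decide_mem, union_sdiff_cancel_right hdisj]
    rw [hcard, card_powersetCard, card_sdiff_of_subset (subset_univ a), card_univ,
      Fintype.card_fin, Nat.choose_mul haj, mul_comm]
  · have hempty : ({c | a ⊆ ones c ∧ #(ones c) = j} : Finset (Fin n → Bool)) = ∅ :=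
      filter_eq_empty_iff.2 fun c _ h => haj (h.2 ▸ card_le_card h.1)
    rw [hempty, Nat.choose_eq_zero_of_lt (not_le.1 haj)]
    simp

def exchangeable (q : ℕ → ℝ) (c : Fin n → Bool) : ℝ := q #(ones c) / n.choose #(ones c)

lemma exchangeable_nonneg {q : ℕ → ℝ} (hq : ∀ j, 0 ≤ q j) (c : Fin n → Bool) :
    0 ≤ exchangeable q c :=
  div_nonneg (hq _) (Nat.cast_nonneg _)

lemma sum_exchangeable_filter_subset_ones (q : ℕ → ℝ) (a : Finset (Fin n)) :
    ∑ c with a ⊆ ones c, exchangeable q c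
      = (∑ j ∈ range (n + 1), (j.choose #a : ℝ) * q j) / n.choose #a := by
  have hmaps : ∀ c ∈ ({c | a ⊆ ones c} : Finset (Fin n → Bool)), #(ones c) ∈ range (n + 1) :=
    fun c _ => mem_range_succ_iff.2 ((card_le_univ _).trans_eq (Fintype.card_fin n))
  have hna : (n.choose #a : ℝ) ≠ 0 := by
    have := card_le_univ a
    rw [Fintype.card_fin] at this
    exact_mod_cast (Nat.choose_pos this).ne'
  rw [← sum_fiberwise_of_maps_to hmaps, sum_div]
  refine sum_congr rfl fun j hj => ?_
  have hnj : (n.choose j : ℝ) ≠ 0 := by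
    exact_mod_cast (Nat.choose_pos (mem_range_succ_iff.1 hj)).ne'
  have hcount : (#{c : Fin n → Bool | a ⊆ ones c ∧ #(ones c) = j} * n.choose #a : ℝ)
      = n.choose j * j.choose #a := by
    exact_mod_cast card_filter_subset_ones_mul_choose a j
  rw [filter_filter, sum_congr rfl fun c hc => by rw [exchangeable, (mem_filter.1 hc).2.2],
    sum_const, nsmul_eq_mul]
  field_simp
  linear_combination q j * hcount

lemma sum_exchangeable (q : ℕ → ℝ) :
    ∑ c : Fin n → Bool, exchangeable q c = ∑ j ∈ range (n + 1), q j := by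
  simpa using sum_exchangeable_filter_subset_ones q ∅

lemma marg_exchangeable (q : ℕ → ℝ) (i : Fin n) :
    Marg n (exchangeable q) i = (∑ j ∈ range (n + 1), (j : ℝ) * q j) / n := by
  simpa [Marg, ones, subset_iff] using sum_exchangeable_filter_subset_ones q {i}

lemma biv_exchangeable (q : ℕ → ℝ) {i j : Fin n} (hij : i ≠ j) :
    Biv n (exchangeable q) i j
      = (∑ l ∈ range (n + 1), (l.choose 2 : ℝ) * q l) / n.choose 2 := by
  have hcard : #{i, j} = 2 := card_pair hij
  rw [← hcard, ← sum_exchangeable_filter_subset_ones]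
  simp [Biv, ones, subset_iff]

end Exchangeable

lemma probGE_le_one {n : ℕ} {θ : (Fin n → Bool) → ℝ} (hθ : IsDist n θ) (k : ℕ) :
    probGE n θ k ≤ 1 :=
  hθ.2 ▸ sum_le_sum_of_subset_of_nonneg (filter_subset _ _) fun c _ _ => hθ.1 c

lemma probGE_eq_one {n k : ℕ} {θ : (Fin n → Bool) → ℝ} (hθ : IsDist n θ)
    (hk : ∀ c, #(ones c) < k → θ c = 0) : probGE n θ k = 1 :=
  hθ.2 ▸ sum_filter_of_ne fun c _ hc => not_lt.1 fun h => hc (hk c h)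

section TwoPoint

def twoPoint (a b : ℕ) (x : ℝ) : ℕ → ℝ :=
  Pi.single a ((b - x) / (b - a)) + Pi.single b ((x - a) / (b - a))

variable {a b N : ℕ} {x : ℝ}

lemma twoPoint_nonneg (hab : a < b) (hax : a ≤ x) (hxb : x ≤ b) (j : ℕ) :
    0 ≤ twoPoint a b x j := by
  have hba : (0 : ℝ) < b - a := sub_pos.2 (by exact_mod_cast hab)
  refine add_nonneg ?_ ?_ <;> rw [Pi.single_apply] <;> split_ifs <;>
    first | exact le_rfl | exact div_nonneg (by linarith) hba.le

lemma twoPoint_eq_zero_of_lt (hab : a ≤ b) {j : ℕ} (hj : j < a) : twoPoint a b x j = 0 := by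
  simp [twoPoint, hj.ne, (hj.trans_le hab).ne]

lemma sum_mul_twoPoint (ha : a < N) (hb : b < N) (f : ℕ → ℝ) :
    ∑ j ∈ range N, f j * twoPoint a b x j = ((b - x) * f a + (x - a) * f b) / (b - a) := by
  simp only [twoPoint, Pi.add_apply, Pi.single_apply, mul_add, mul_ite, mul_zero, sum_add_distrib,
    sum_ite_eq', mem_range, ha, hb, if_true]
  ring

lemma sum_twoPoint (hab : a < b) (hbN : b < N) : ∑ j ∈ range N, twoPoint a b x j = 1 := by
  have hba : (b : ℝ) - a ≠ 0 := sub_ne_zero.2 (by exact_mod_cast hab.ne')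
  simpa [div_self hba] using sum_mul_twoPoint (x := x) (hab.trans hbN) hbN fun _ => 1

lemma sum_mul_twoPoint_id (hab : a < b) (hbN : b < N) :
    ∑ j ∈ range N, (j : ℝ) * twoPoint a b x j = x := by
  have hba : (b : ℝ) - a ≠ 0 := sub_ne_zero.2 (by exact_mod_cast hab.ne')
  rw [sum_mul_twoPoint (hab.trans hbN) hbN, div_eq_iff hba]
  ring

lemma sum_choose_two_mul_twoPoint (hab : a < b) (hbN : b < N) :
    ∑ j ∈ range N, (j.choose 2 : ℝ) * twoPoint a b x j
      = (x ^ 2 - x + (b - x) * (x - a)) / 2 := by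
  have hba : (b : ℝ) - a ≠ 0 := sub_ne_zero.2 (by exact_mod_cast hab.ne')
  rw [sum_mul_twoPoint (hab.trans hbN) hbN, Nat.cast_choose_two, Nat.cast_choose_two]
  field_simp
  ring

end TwoPoint

lemma twoPoint_variance_le_binomial {n m : ℕ} (hmn : m < n) (p : ℝ) :
    (m + 1 - n * p) * (n * p - m) ≤ n * p * (1 - p) := by
  have hm0 : (0 : ℝ) ≤ m := m.cast_nonneg
  have hm1 : (0 : ℝ) ≤ n - 1 - m := by
    have : (m : ℝ) + 1 ≤ n := by exact_mod_cast hmn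
    linarith
  have key : n * (n * p * (1 - p) - (m + 1 - n * p) * (n * p - m))
      = m * (n - 1 - m) + m * (m + 1 - n * p) ^ 2 + (n - 1 - m) * (n * p - m) ^ 2 := by
    ring
  have : 0 ≤ n * (n * p * (1 - p) - (m + 1 - n * p) * (n * p - m)) := by
    rw [key]
    exact add_nonneg (add_nonneg (mul_nonneg hm0 hm1) (mul_nonneg hm0 (sq_nonneg _)))
      (mul_nonneg hm1 (sq_nonneg _))
  have hn : (0 : ℝ) < n := by linarith
  nlinarith

lemma exists_count_law {n k : ℕ} {p : ℝ} (hp0 : 0 < p) (hp1 : p < 1)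
    (hk : (k : ℝ) < (n - 1) * p) :
    ∃ q : ℕ → ℝ, (∀ j, 0 ≤ q j) ∧ (∀ j < k, q j = 0) ∧ ∑ j ∈ range (n + 1), q j = 1 ∧
      ∑ j ∈ range (n + 1), (j : ℝ) * q j = n * p ∧
      ∑ j ∈ range (n + 1), (j.choose 2 : ℝ) * q j = n.choose 2 * p ^ 2 := by
  set x : ℝ := n * p with hx
  have hn1 : (1 : ℝ) < n := by nlinarith [k.cast_nonneg (α := ℝ)]
  have hkx : (k : ℝ) + p < x := by linarith
  have hxn : x < n := by nlinarith
  set m := ⌊x⌋₊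
  have hmx : (m : ℝ) ≤ x := Nat.floor_le (by positivity)
  have hxm : x < m + 1 := Nat.lt_floor_add_one x
  have hkm : k < m + 1 := by exact_mod_cast (show (k : ℝ) < m + 1 by linarith)
  have hmn : m < n := by exact_mod_cast (show (m : ℝ) < n by linarith)
  have hkn : k < n := by omega
  have hvσ := twoPoint_variance_le_binomial hmn p
  have hσM : x * (1 - p) ≤ (n - x) * (x - k) := by
    rw [show x * (1 - p) = (n - x) * p by ring]
    exact mul_le_mul_of_nonneg_left (by linarith) (by linarith)
  obtain ⟨α, β, hα, hβ, hαβ, hmix⟩ :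
      x * (1 - p) ∈ segment ℝ ((m + 1 - x) * (x - m)) ((n - x) * (x - k)) := by
    rw [segment_eq_Icc (hvσ.trans hσM)]
    exact ⟨hvσ, hσM⟩
  rw [smul_eq_mul, smul_eq_mul] at hmix
  set q := α • twoPoint m (m + 1) x + β • twoPoint k n x
  have moment (f : ℕ → ℝ) : ∑ j ∈ range (n + 1), f j * q j
      = α * ∑ j ∈ range (n + 1), f j * twoPoint m (m + 1) x j
        + β * ∑ j ∈ range (n + 1), f j * twoPoint k n x j := by
    simp only [q, Pi.add_apply, Pi.smul_apply, smul_eq_mul, mul_add, sum_add_distrib,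
      mul_left_comm (f _), ← mul_sum]
  have hm1n : m + 1 < n + 1 := Nat.succ_lt_succ hmn
  refine ⟨q, fun j => ?_, fun j hj => ?_, ?_, ?_, ?_⟩
  · exact add_nonneg
      (mul_nonneg hα (twoPoint_nonneg m.lt_succ_self hmx (by push_cast; linarith) j))
      (mul_nonneg hβ (twoPoint_nonneg hkn (by linarith) hxn.le j))
  · simp [q, twoPoint_eq_zero_of_lt (Nat.le_succ m) (show j < m by omega),
      twoPoint_eq_zero_of_lt hkn.le hj]
  · have total := moment fun _ => 1
    simp only [one_mul] at total
    rw [total, sum_twoPoint m.lt_succ_self hm1n, sum_twoPoint hkn n.lt_succ_self,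
      mul_one, mul_one, hαβ]
  · rw [moment, sum_mul_twoPoint_id m.lt_succ_self hm1n, sum_mul_twoPoint_id hkn n.lt_succ_self]
    linear_combination x * hαβ
  · rw [moment, sum_choose_two_mul_twoPoint m.lt_succ_self hm1n,
      sum_choose_two_mul_twoPoint hkn n.lt_succ_self, Nat.cast_choose_two]
    push_cast
    linear_combination (hmix + (x ^ 2 - x) * hαβ) / 2 + (x + n * p - p) / 2 * hx

theorem stmt_11_general (n k : ℕ) (p : ℝ) (hp0 : 0 < p) (hp1 : p < 1)
    (hk : (k : ℝ) < ((n : ℝ) - 1) * p) :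
    IsGreatest
      {x : ℝ | ∃ θ : (Fin n → Bool) → ℝ,
        PairwiseIndep n (fun _ => p) θ ∧ probGE n θ k = x} 1 := by
  obtain ⟨q, hq0, hqk, htotal, hmean, hpair⟩ := exists_count_law hp0 hp1 hk
  have hθ : PairwiseIndep n (fun _ => p) (exchangeable q) := by
    refine ⟨⟨exchangeable_nonneg hq0, by rw [sum_exchangeable, htotal]⟩, fun i => ?_,
      fun i j hij => ?_⟩
    · have : (n : ℝ) ≠ 0 := by exact_mod_cast i.pos.ne'
      rw [marg_exchangeable, hmean]
      field_simp
    · have hn : 2 ≤ n := by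
        have := j.isLt
        have := Fin.lt_def.1 hij
        omega
      have : (n.choose 2 : ℝ) ≠ 0 := by exact_mod_cast (Nat.choose_pos hn).ne'
      rw [biv_exchangeable q hij.ne, hpair]
      field_simp
  refine ⟨⟨exchangeable q, hθ, probGE_eq_one hθ.1 fun c hc => ?_⟩, ?_⟩
  · rw [exchangeable, hqk _ hc, zero_div]
  · rintro _ ⟨θ, hθ, rfl⟩
    exact probGE_le_one hθ.1 k

theorem stmt_11 (n k : ℕ) (hn : 2 ≤ n) (hk1 : 1 ≤ k) (hkn : k ≤ n)
    (p : ℝ) (hp0 : 0 < p) (hp1 : p < 1)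
    (hk : (k : ℝ) < ((n : ℝ) - 1) * p) :
    IsGreatest
      {x : ℝ | ∃ θ : (Fin n → Bool) → ℝ,
        PairwiseIndep n (fun _ => p) θ ∧ probGE n θ k = x} 1 :=
  stmt_11_general n k p hp0 hp1 hk
end
end

section
/- Let n ≥ 2, let p ∈ (0,1), and let k be an integer with 1 ≤ k ≤ n satisfying (n−1)p ≤ k < 1 + (n−1)p. Then the maximum of P_θ(∑_{i=1}^n c_i ≥ k) over all pairwise independent distributions θ with all marginal probabilities equal to p equals ( (n−1)(1−p) + k )·p / k, and this maximum is attained by some such distribution θ. -/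
/-!
Let `N` be the number of ones. Pairwise independence fixes the first two moments,
`E N = n p` and `E N² = n p + n (n - 1) p²`. For `0 ≤ N ≤ n` the quadratic `N (n + k - N)`
dominates `n k 1[N ≥ k]`, so taking expectations gives `n k P(N ≥ k) ≤ (n + k) E N - E N²`, which
is the claimed bound. The quadratic is tight exactly at the levels `N ∈ {0, k, n}`; the exchangeable
distribution carried by these levels whose three masses match the total mass and the two moments
attains the bound, and `(n - 1) p ≤ k ≤ 1 + (n - 1) p` is what makes those masses nonnegative.
-/

open Finset

noncomputable section

namespace Finset

variable {α : Type*} [DecidableEq α]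

theorem card_filter_powersetCard_subset_mul_descFactorial {s t : Finset α} (hst : s ⊆ t)
    (k : ℕ) :
    #((t.powersetCard k).filter (s ⊆ ·)) * (#t).descFactorial #s
      = (#t).choose k * k.descFactorial #s := by
  by_cases hsk : #s ≤ k
  · rw [card_filter_powersetCard_subset s t k hst hsk, Nat.descFactorial_eq_factorial_mul_choose,
      Nat.descFactorial_eq_factorial_mul_choose, mul_comm ((#t - #s).choose _),
      mul_assoc, ← Nat.choose_mul hsk]
    ring
  · have hempty : (t.powersetCard k).filter (s ⊆ ·) = ∅ := by
      refine filter_false_of_mem fun S hS hsS => hsk ?_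
      exact (mem_powersetCard.mp hS).2 ▸ card_le_card hsS
    rw [hempty, Nat.descFactorial_eq_zero_iff_lt (n := k) |>.mpr (by omega)]
    simp

end Finset

section Ones

variable {α : Type*} [Fintype α] [DecidableEq α]

def onesEquiv : (α → Bool) ≃ Finset α where
  toFun c := univ.filter fun i => c i = true
  invFun S i := decide (i ∈ S)
  left_inv c := by ext i; simp
  right_inv S := by ext i; simp

theorem card_onesEquiv (c : α → Bool) :
    (#(onesEquiv c) : ℝ) = ∑ i, if c i = true then 1 else 0 := by
  simp only [onesEquiv, Equiv.coe_fn_mk, card_filter]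
  push_cast
  rfl

theorem sum_filter_onesEquiv {P : (α → Bool) → Prop} {Q : Finset α → Prop} [DecidablePred P]
    [DecidablePred Q] (hPQ : ∀ c, P c ↔ Q (onesEquiv c)) (g : Finset α → ℝ) :
    ∑ c ∈ univ.filter P, (g ∘ onesEquiv) c = ∑ S ∈ univ.filter Q, g S :=
  sum_equiv onesEquiv (by simpa using hPQ) fun _ _ => rfl

end Ones

section Moments

variable {n : ℕ} (θ : (Fin n → Bool) → ℝ)

theorem biv_self (i : Fin n) : Biv n θ i i = Marg n θ i := by
  simp only [Biv, and_self, Marg]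

theorem biv_comm (i j : Fin n) : Biv n θ i j = Biv n θ j i := by
  simp only [Biv, and_comm]

theorem sum_mul_card_onesEquiv : ∑ c, θ c * #(onesEquiv c) = ∑ i, Marg n θ i := by
  simp only [card_onesEquiv, mul_sum, Marg, sum_filter, mul_ite, mul_one, mul_zero]
  exact sum_comm

theorem sum_mul_card_onesEquiv_sq :
    ∑ c, θ c * (#(onesEquiv c) : ℝ) ^ 2 = ∑ i, ∑ j, Biv n θ i j := by
  simp only [card_onesEquiv, sq, sum_mul_sum, ite_zero_mul_ite_zero, mul_one]
  simp only [mul_sum, mul_ite, mul_one, mul_zero, Biv, sum_filter]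
  rw [sum_comm]
  exact sum_congr rfl fun i _ => sum_comm

theorem sum_sum_biv_of_pairwiseIndep {p : ℝ} (hθ : PairwiseIndep n (fun _ => p) θ) :
    ∑ i, ∑ j, Biv n θ i j = n * p + n * (n - 1) * p ^ 2 := by
  obtain ⟨-, hmarg, hbiv⟩ := hθ
  have hrow (i : Fin n) : ∑ j, Biv n θ i j = p + (n - 1) * p ^ 2 := by
    have hoff : ∀ j ∈ univ.erase i, Biv n θ i j = p ^ 2 := fun j hj => by
      rcases lt_or_gt_of_ne (ne_of_mem_erase hj).symm with h | h
      · rw [hbiv i j h, sq]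
      · rw [biv_comm, hbiv j i h, sq]
    rw [← add_sum_erase _ _ (mem_univ i), biv_self, hmarg, sum_congr rfl hoff, sum_const,
      card_erase_of_mem (mem_univ i), card_univ, Fintype.card_fin, nsmul_eq_mul,
      Nat.cast_pred (Fin.pos i)]
  simp only [hrow, sum_const, card_univ, Fintype.card_fin, nsmul_eq_mul]
  ring

theorem mul_boole_le_mul_add_sub {n k m : ℕ} (hm : m ≤ n) :
    (n * k : ℝ) * (if k ≤ m then 1 else 0) ≤ m * (n + k - m) := by
  have hm' : (m : ℝ) ≤ n := by exact_mod_cast hm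
  split_ifs with hkm
  · have hkm' : (k : ℝ) ≤ m := by exact_mod_cast hkm
    nlinarith
  · rw [mul_zero]
    exact mul_nonneg (Nat.cast_nonneg m) (by linarith)

theorem mul_probGE_le (hθ : ∀ c, 0 ≤ θ c) (k : ℕ) :
    n * k * probGE n θ k
      ≤ (n + k) * ∑ c, θ c * #(onesEquiv c) - ∑ c, θ c * (#(onesEquiv c) : ℝ) ^ 2 := by
  rw [probGE, sum_filter, mul_sum, mul_sum, ← sum_sub_distrib]
  refine sum_le_sum fun c _ => ?_
  have hcard : #(onesEquiv c) ≤ n := (card_le_univ _).trans_eq (Fintype.card_fin n)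
  have := mul_le_mul_of_nonneg_left (mul_boole_le_mul_add_sub (k := k) hcard) (hθ c)
  rw [show (univ.filter fun i => c i = true) = onesEquiv c from rfl]
  split_ifs at this ⊢ <;> linarith

theorem probGE_le_of_pairwiseIndep {k : ℕ} (hn : 0 < n) (hk : 0 < k) {p : ℝ}
    (hθ : PairwiseIndep n (fun _ => p) θ) :
    probGE n θ k ≤ ((n - 1) * (1 - p) + k) * p / k := by
  have hbound := mul_probGE_le θ hθ.1.1 k
  rw [sum_mul_card_onesEquiv, sum_mul_card_onesEquiv_sq, sum_sum_biv_of_pairwiseIndep θ hθ,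
    sum_congr rfl fun i _ => hθ.2.1 i, sum_const, card_univ, Fintype.card_fin, nsmul_eq_mul]
    at hbound
  have hn' : (0 : ℝ) < n := by exact_mod_cast hn
  rw [le_div_iff₀ (by exact_mod_cast hk)]
  nlinarith

end Moments

section ThreePoint

variable {α : Type*} [Fintype α] [DecidableEq α]

def threePoint (k : ℕ) (a b z : ℝ) (S : Finset α) : ℝ :=
  (if S = univ then a else 0) + (if #S = k then b else 0) + (if S = ∅ then z else 0)

theorem sum_threePoint (k : ℕ) (a b z : ℝ) (F : Finset (Finset α)) :
    ∑ S ∈ F, threePoint k a b z S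
      = (if univ ∈ F then a else 0) + #(F.filter (#· = k)) * b
        + (if ∅ ∈ F then z else 0) := by
  simp only [threePoint, sum_add_distrib, sum_ite_eq', ← sum_filter, sum_const, nsmul_eq_mul]

theorem sum_superset_threePoint (k : ℕ) (a b z : ℝ) (s : Finset α) :
    ∑ S ∈ univ.filter (s ⊆ ·), threePoint k a b z S
      = a + #((powersetCard k univ).filter (s ⊆ ·)) * b + (if s = ∅ then z else 0) := by
  rw [sum_threePoint, filter_filter, powersetCard_eq_filter, powerset_univ, filter_filter]
  simp only [mem_filter, mem_univ, subset_univ, subset_empty, true_and, if_true, and_comm]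

end ThreePoint

section ThreePointDist

variable {n : ℕ} (k : ℕ) (a b z : ℝ)

theorem sum_threePoint_comp_onesEquiv :
    ∑ c : Fin n → Bool, (threePoint k a b z ∘ onesEquiv) c = a + n.choose k * b + z := by
  have hslice : (univ : Finset (Finset (Fin n))).filter (#· = k) = powersetCard k univ := by
    rw [powersetCard_eq_filter, powerset_univ]
  rw [Fintype.sum_equiv onesEquiv (threePoint k a b z ∘ onesEquiv) _ fun _ => rfl,
    sum_threePoint, hslice, card_powersetCard, card_univ, Fintype.card_fin]
  simp only [mem_univ, if_true]

theorem marg_threePoint_comp_onesEquiv (i : Fin n) :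
    n * Marg n (threePoint k a b z ∘ onesEquiv) i = n * a + n.choose k * k * b := by
  have hcount := card_filter_powersetCard_subset_mul_descFactorial (subset_univ {i}) k
  simp only [card_singleton, card_univ, Fintype.card_fin, Nat.descFactorial_one] at hcount
  have hcount' := congrArg (Nat.cast : ℕ → ℝ) hcount
  push_cast at hcount'
  rw [Marg, sum_filter_onesEquiv (Q := ({i} ⊆ ·)) ?_,
    sum_superset_threePoint, if_neg (singleton_ne_empty i)]
  · rw [← hcount']
    ring
  · simp [onesEquiv]

theorem biv_threePoint_comp_onesEquiv {i j : Fin n} (hij : i ≠ j) :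
    n * (n - 1) * Biv n (threePoint k a b z ∘ onesEquiv) i j
      = n * (n - 1) * a + n.choose k * (k * (k - 1)) * b := by
  have hcount := card_filter_powersetCard_subset_mul_descFactorial (subset_univ {i, j}) k
  rw [card_pair hij, card_univ, Fintype.card_fin] at hcount
  have hcount' := congrArg (Nat.cast : ℕ → ℝ) hcount
  push_cast [Nat.cast_descFactorial_two] at hcount'
  rw [Biv, sum_filter_onesEquiv (Q := ({i, j} ⊆ ·)) ?_,
    sum_superset_threePoint, if_neg (insert_ne_empty i {j}), ← hcount']
  · ring
  · simp [onesEquiv, insert_subset_iff]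

theorem probGE_threePoint_comp_onesEquiv (hk : 0 < k) (hkn : k ≤ n) :
    probGE n (threePoint k a b z ∘ onesEquiv) k = a + n.choose k * b := by
  have hslice : univ.filter (fun S : Finset (Fin n) => k ≤ #S ∧ #S = k) = powersetCard k univ := by
    ext S
    rw [mem_filter, mem_powersetCard_univ, and_iff_right (mem_univ S)]
    omega
  rw [probGE, sum_filter_onesEquiv (Q := (k ≤ #·)) ?_, sum_threePoint, filter_filter, hslice,
    card_powersetCard, card_univ, Fintype.card_fin]
  · simp only [mem_filter, mem_univ, card_univ, Fintype.card_fin, card_empty, true_and, hkn,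
      if_true, Nat.le_zero, hk.ne', if_false, add_zero]
  · exact fun _ => Iff.rfl

end ThreePointDist

section Extremal

variable {n k : ℕ} {p : ℝ}

/-- The middle mass is the weight of the level `k`, spread evenly over its `n.choose k` vectors. -/
def extremalDist (n k : ℕ) (p : ℝ) : (Fin n → Bool) → ℝ :=
  threePoint k (p * ((n - 1) * p - k + 1) / (n - k))
    (n * (n - 1) * p * (1 - p) / (k * (n - k)) / n.choose k)
    ((1 - p) * (k - (n - 1) * p) / k) ∘ onesEquiv

theorem pairwiseIndep_extremalDist (hk : 0 < k) (hkn : k < n) (hp0 : 0 ≤ p) (hp1 : p ≤ 1)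
    (hlo : (n - 1) * p ≤ k) (hhi : k ≤ 1 + (n - 1) * p) :
    PairwiseIndep n (fun _ => p) (extremalDist n k p) := by
  have hk' : (1 : ℝ) ≤ k := by exact_mod_cast hk
  have hnk : (0 : ℝ) < n - k := sub_pos.mpr (by exact_mod_cast hkn)
  have hC : (0 : ℝ) < n.choose k := by exact_mod_cast Nat.choose_pos hkn.le
  refine ⟨⟨fun c => ?_, ?_⟩, fun i => ?_, fun i j hij => ?_⟩
  · refine add_nonneg (add_nonneg (ite_nonneg ?_ le_rfl) (ite_nonneg ?_ le_rfl))
      (ite_nonneg ?_ le_rfl)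
    · exact div_nonneg (mul_nonneg hp0 (by linarith)) hnk.le
    · have : (0 : ℝ) ≤ n - 1 := by linarith
      positivity
    · exact div_nonneg (mul_nonneg (by linarith) (by linarith)) (by linarith)
  · rw [extremalDist, sum_threePoint_comp_onesEquiv]
    field_simp
    ring
  · refine mul_left_cancel₀ (by linarith : (n : ℝ) ≠ 0) ?_
    rw [extremalDist, marg_threePoint_comp_onesEquiv]
    field_simp
    ring
  · refine mul_left_cancel₀ (by nlinarith : (n : ℝ) * (n - 1) ≠ 0) ?_
    rw [extremalDist, biv_threePoint_comp_onesEquiv _ _ _ _ hij.ne]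
    field_simp
    ring

theorem probGE_extremalDist (hk : 0 < k) (hkn : k < n) :
    probGE n (extremalDist n k p) k = ((n - 1) * (1 - p) + k) * p / k := by
  have hk' : (0 : ℝ) < k := by exact_mod_cast hk
  have hnk : (0 : ℝ) < n - k := sub_pos.mpr (by exact_mod_cast hkn)
  have hC : (0 : ℝ) < n.choose k := by exact_mod_cast Nat.choose_pos hkn.le
  rw [extremalDist, probGE_threePoint_comp_onesEquiv _ _ _ _ hk hkn.le]
  field_simp
  ring

end Extremal

theorem stmt_12_general (n k : ℕ) (hn : 2 ≤ n) (hk1 : 1 ≤ k)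
    (p : ℝ) (hp0 : 0 < p) (hp1 : p < 1)
    (hk1' : ((n : ℝ) - 1) * p ≤ (k : ℝ)) (hk2' : (k : ℝ) < 1 + ((n : ℝ) - 1) * p) :
    IsGreatest
      {x : ℝ | ∃ θ : (Fin n → Bool) → ℝ,
        PairwiseIndep n (fun _ => p) θ ∧ probGE n θ k = x}
      ((((n : ℝ) - 1) * (1 - p) + (k : ℝ)) * p / (k : ℝ)) := by
  have hkn : k < n := by
    have hn' : (2 : ℝ) ≤ n := by exact_mod_cast hn
    have : (k : ℝ) < n := by nlinarith
    exact_mod_cast this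
  refine ⟨⟨extremalDist n k p, ?_, probGE_extremalDist hk1 hkn⟩, ?_⟩
  · exact pairwiseIndep_extremalDist hk1 hkn hp0.le hp1.le hk1' hk2'.le
  · rintro _ ⟨θ, hθ, rfl⟩
    exact probGE_le_of_pairwiseIndep θ (by omega) hk1 hθ

theorem stmt_12 (n k : ℕ) (hn : 2 ≤ n) (hk1 : 1 ≤ k) (hkn : k ≤ n)
    (p : ℝ) (hp0 : 0 < p) (hp1 : p < 1)
    (hk1' : ((n : ℝ) - 1) * p ≤ (k : ℝ)) (hk2' : (k : ℝ) < 1 + ((n : ℝ) - 1) * p) :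
    IsGreatest
      {x : ℝ | ∃ θ : (Fin n → Bool) → ℝ,
        PairwiseIndep n (fun _ => p) θ ∧ probGE n θ k = x}
      ((((n : ℝ) - 1) * (1 - p) + (k : ℝ)) * p / (k : ℝ)) :=
  stmt_12_general n k hn hk1 p hp0 hp1 hk1' hk2'
end
end
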